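/- arXiv:1705.05936 — 2 statements merged into one kernel-verified Lean document; each statement's English description precedes it below -/
import Mathlib

section
/- Nonlinear estimate for the weighted multiplier (Lemma 6.1): For any vector fields [u,v], [ū,v̄] ∈ X, with w(x) := 1 − x, N^u(ū,v̄) := ε^{1/2+γ}(ū ∂_x ū + v̄ ∂_y ū) and N^v(ū,v̄) := ε^{1/2+γ}(ū ∂_x v̄ + v̄ ∂_y v̄), one has |∫_Ω ∂_y N^u(ū,v̄) · ∂_y(u y² w)| + |∫_Ω ∂_y N^v(ū,v̄) · ε ∂_x(u y² w)| ≤ C ε^{γ/2} ‖ū,v̄‖²_X ‖u,v‖_X. -/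
open MeasureTheory Set Filter

noncomputable section

/-- Partial derivative in the first (horizontal, `x`) variable. -/
def pdx (f : ℝ → ℝ → ℝ) : ℝ → ℝ → ℝ := fun x y => deriv (fun t => f t y) x

/-- Partial derivative in the second (vertical, `y`) variable. -/
def pdy (f : ℝ → ℝ → ℝ) : ℝ → ℝ → ℝ := fun x y => deriv (f x) y

/-- The domain Ω = (0,L) × (0,∞). -/
def Omeg (L : ℝ) : Set (ℝ × ℝ) := (Ioo (0:ℝ) L) ×ˢ (Ioi (0:ℝ))

/-- Lebesgue measure restricted to Ω. -/
def muOm (L : ℝ) : Measure (ℝ × ℝ) := volume.restrict (Omeg L)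

/-- Squared L² norm over Ω of a function of (x,y). -/
def sq2 (L : ℝ) (F : ℝ → ℝ → ℝ) : ℝ := ∫ p in Omeg L, (F p.1 p.2) ^ 2

/-- Integral over Ω of a function of (x,y). -/
def intO (L : ℝ) (F : ℝ → ℝ → ℝ) : ℝ := ∫ p in Omeg L, F p.1 p.2

/-- Squared L² norm on a vertical boundary line (in the y-variable). -/
def sqB (F : ℝ → ℝ) : ℝ := ∫ y in Ioi (0:ℝ), (F y) ^ 2

/-- Hypotheses on the background profiles [u_s, v_s]: smoothness, lower bound
`c₀ ≤ u_s`, divergence-free, the decomposition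
`v_s = ε^{-1/2} v⁰_e(x, √ε y) + ṽ_s` with `ṽ_s` bounded, the smallness
`|v⁰_e(x,Y)| ≤ δe |Y|`, and the weighted uniform bounds of Lemma A.13. -/
structure ProfileHyp (L ε c₀ K δe : ℝ) (us vs v0e vst : ℝ → ℝ → ℝ) : Prop where
  smooth_us : ContDiff ℝ (⊤ : ℕ∞) (Function.uncurry us)
  smooth_vs : ContDiff ℝ (⊤ : ℕ∞) (Function.uncurry vs)
  us_lower : ∀ x y, c₀ ≤ us x y
  profile_div : ∀ x y, pdx us x y + pdy vs x y = 0
  decomp : ∀ x y, vs x y = (Real.sqrt ε)⁻¹ * v0e x (Real.sqrt ε * y) + vst x y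
  v0e_small : ∀ x Y, |v0e x Y| ≤ δe * |Y|
  vst_bdd : ∀ x y, |vst x y| ≤ K ∧ |pdx vst x y| ≤ K ∧ |pdy vst x y| ≤ K
  wbd_u : ∀ (k j : ℕ) (x y : ℝ), 0 ≤ y → |y ^ k * (pdy^[k] (pdx^[j] us)) x y| ≤ K
  wbd_v : ∀ (k j : ℕ) (x y : ℝ), 0 ≤ y → |y ^ k * (pdy^[k+1] (pdx^[j] vs)) x y| ≤ K

/-- Membership in the function space X: smooth, divergence free, Dirichlet
boundary conditions on {y=0}, {x=0} and decay as y → ∞, together with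
finiteness (square integrability) of all the quantities entering the X norm. -/
structure MemX (L ε : ℝ) (u v : ℝ → ℝ → ℝ) : Prop where
  smooth_u : ContDiff ℝ (⊤ : ℕ∞) (Function.uncurry u)
  smooth_v : ContDiff ℝ (⊤ : ℕ∞) (Function.uncurry v)
  divfree : ∀ x y, pdx u x y + pdy v x y = 0
  bc_y0 : ∀ x, u x 0 = 0 ∧ v x 0 = 0
  bc_x0 : ∀ y, u 0 y = 0 ∧ v 0 y = 0
  decay : ∀ x, Tendsto (fun y => u x y) atTop (nhds 0) ∧
               Tendsto (fun y => v x y) atTop (nhds 0)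
  mem_uy : MemLp (fun p : ℝ × ℝ => pdy u p.1 p.2) 2 (muOm L)
  mem_ux : MemLp (fun p : ℝ × ℝ => pdx u p.1 p.2) 2 (muOm L)
  mem_wuy : MemLp (fun p : ℝ × ℝ => p.2 * pdy u p.1 p.2) 2 (muOm L)
  mem_wux : MemLp (fun p : ℝ × ℝ => p.2 * pdx u p.1 p.2) 2 (muOm L)
  mem_vy : MemLp (fun p : ℝ × ℝ => pdy v p.1 p.2) 2 (muOm L)
  mem_vx : MemLp (fun p : ℝ × ℝ => pdx v p.1 p.2) 2 (muOm L)
  mem_wvy : MemLp (fun p : ℝ × ℝ => p.2 * pdy v p.1 p.2) 2 (muOm L)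
  mem_wuyy : MemLp (fun p : ℝ × ℝ => p.2 * pdy (pdy u) p.1 p.2) 2 (muOm L)
  mem_wuxy : MemLp (fun p : ℝ × ℝ => p.2 * pdx (pdy u) p.1 p.2) 2 (muOm L)
  mem_wuxx : MemLp (fun p : ℝ × ℝ => p.2 * pdx (pdx u) p.1 p.2) 2 (muOm L)
  bdd : ∃ M, ∀ x y, |u x y| ≤ M ∧ |v x y| ≤ M
  memB_wuy : MemLp (fun y => y * pdy u L y) 2 (volume.restrict (Ioi (0:ℝ)))
  memB_wux : MemLp (fun y => y * pdx u L y) 2 (volume.restrict (Ioi (0:ℝ)))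
  memB_ux : MemLp (fun y => pdx u L y) 2 (volume.restrict (Ioi (0:ℝ)))

/-- The linearized convection operator S^u. -/
def Su (us vs u v : ℝ → ℝ → ℝ) : ℝ → ℝ → ℝ := fun x y =>
  us x y * pdx u x y + pdx us x y * u x y + vs x y * pdy u x y + pdy us x y * v x y

/-- The linearized convection operator S^v. -/
def Sv (us vs u v : ℝ → ℝ → ℝ) : ℝ → ℝ → ℝ := fun x y =>
  us x y * pdx v x y + pdx vs x y * u x y + vs x y * pdy v x y + pdy vs x y * v x y

/-- [u,v,P] solves the linearized Navier–Stokes remainder system on Ω with the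
stress-free boundary conditions at {x = L}. -/
structure SolvesLin (L ε : ℝ) (us vs u v P f g : ℝ → ℝ → ℝ) (aL bL : ℝ → ℝ) : Prop where
  momx : ∀ x ∈ Ioo (0:ℝ) L, ∀ y ∈ Ioi (0:ℝ),
    -(pdy (pdy u) x y + ε * pdx (pdx u) x y) + Su us vs u v x y + pdx P x y = f x y
  momy : ∀ x ∈ Ioo (0:ℝ) L, ∀ y ∈ Ioi (0:ℝ),
    -(pdy (pdy v) x y + ε * pdx (pdx v) x y) + Sv us vs u v x y + ε⁻¹ * pdy P x y = g x y
  incompressible : ∀ x ∈ Ioo (0:ℝ) L, ∀ y ∈ Ioi (0:ℝ), pdx u x y + pdy v x y = 0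
  bc_pressure : ∀ y ∈ Ioi (0:ℝ), P L y - 2 * ε * pdx u L y = aL y
  bc_shear : ∀ y ∈ Ioi (0:ℝ), pdy u L y + ε * pdx v L y = bL y

/-- Sup norm over the closure of Ω = [0,L] × [0,∞). -/
def supOm (L : ℝ) (F : ℝ → ℝ → ℝ) : ℝ :=
  ⨆ x ∈ Icc (0:ℝ) L, ⨆ y ∈ Ici (0:ℝ), |F x y|

/-- The X₁ norm:
‖y ∂_y u‖ + ‖y √ε ∂_x u‖ + ‖(∂_y v, √ε ∂_x v)‖ + ‖y(∂_y²u, √ε ∂_x∂_yu, ε ∂_x²u)‖. -/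
def normX1 (L ε : ℝ) (u v : ℝ → ℝ → ℝ) : ℝ :=
  Real.sqrt (sq2 L (fun x y => y * pdy u x y))
    + Real.sqrt (ε * sq2 L (fun x y => y * pdx u x y))
    + Real.sqrt (sq2 L (pdy v) + ε * sq2 L (pdx v))
    + Real.sqrt (sq2 L (fun x y => y * pdy (pdy u) x y)
        + ε * sq2 L (fun x y => y * pdx (pdy u) x y)
        + ε ^ 2 * sq2 L (fun x y => y * pdx (pdx u) x y))

/-- The full X norm: X₁ norm plus ε^{γ/2}‖(u,√ε v)‖_∞ plus the boundary norm
‖(y ∂_y u, y √ε ∂_x u, √ε ∂_x u)‖_{L²(x=L)}. -/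
def normX (L ε γ : ℝ) (u v : ℝ → ℝ → ℝ) : ℝ :=
  normX1 L ε u v
    + ε ^ (γ / 2) * (supOm L u + Real.sqrt ε * supOm L v)
    + Real.sqrt (sqB (fun y => y * pdy u L y) + ε * sqB (fun y => y * pdx u L y)
        + ε * sqB (fun y => pdx u L y))

/-- The quadratic nonlinearity N^u(ū,v̄) = ε^{1/2+γ}(ū ∂_x ū + v̄ ∂_y ū). -/
def Nu (ε γ : ℝ) (ub vb : ℝ → ℝ → ℝ) : ℝ → ℝ → ℝ := fun x y =>
  ε ^ ((1:ℝ)/2 + γ) * (ub x y * pdx ub x y + vb x y * pdy ub x y)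

/-- The quadratic nonlinearity N^v(ū,v̄) = ε^{1/2+γ}(ū ∂_x v̄ + v̄ ∂_y v̄). -/
def Nv (ε γ : ℝ) (ub vb : ℝ → ℝ → ℝ) : ℝ → ℝ → ℝ := fun x y =>
  ε ^ ((1:ℝ)/2 + γ) * (ub x y * pdx vb x y + vb x y * pdy vb x y)

/-- The weighted multiplier u y² w(x), with w(x) = 1 - x. -/
def wmul (u : ℝ → ℝ → ℝ) : ℝ → ℝ → ℝ := fun x y => u x y * y ^ 2 * (1 - x)


/-! ### Auxiliary machinery -/

open Function
open scoped ENNReal NNReal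

section calc1
variable {f : ℝ → ℝ → ℝ}

lemma contDiff_slice_y (hf : ContDiff ℝ (⊤ : ℕ∞) (Function.uncurry f)) (x : ℝ) : ContDiff ℝ (⊤ : ℕ∞) (f x) :=
  hf.comp (contDiff_const.prodMk contDiff_id)

lemma contDiff_slice_x (hf : ContDiff ℝ (⊤ : ℕ∞) (Function.uncurry f)) (y : ℝ) : ContDiff ℝ (⊤ : ℕ∞) (fun t => f t y) :=
  hf.comp (contDiff_id.prodMk contDiff_const)

lemma hasDerivAt_slice_x (hf : ContDiff ℝ (⊤ : ℕ∞) (Function.uncurry f)) (x y : ℝ) :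
    HasDerivAt (fun t => f t y) (fderiv ℝ (uncurry f) (x, y) (1, 0)) x := by
  have h1 : HasFDerivAt (uncurry f) (fderiv ℝ (uncurry f) (x, y)) (x, y) :=
    (hf.differentiable (by simp) (x, y)).hasFDerivAt
  have h2 : HasDerivAt (fun t : ℝ => (t, y)) ((1 : ℝ), (0 : ℝ)) x :=
    (hasDerivAt_id x).prodMk (hasDerivAt_const x y)
  exact h1.comp_hasDerivAt x h2

lemma hasDerivAt_slice_y (hf : ContDiff ℝ (⊤ : ℕ∞) (Function.uncurry f)) (x y : ℝ) :
    HasDerivAt (f x) (fderiv ℝ (uncurry f) (x, y) (0, 1)) y := by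
  have h1 : HasFDerivAt (uncurry f) (fderiv ℝ (uncurry f) (x, y)) (x, y) :=
    (hf.differentiable (by simp) (x, y)).hasFDerivAt
  have h2 : HasDerivAt (fun t : ℝ => (x, t)) ((0 : ℝ), (1 : ℝ)) y :=
    (hasDerivAt_const y x).prodMk (hasDerivAt_id y)
  exact h1.comp_hasDerivAt y h2

lemma pdx_eq (hf : ContDiff ℝ (⊤ : ℕ∞) (Function.uncurry f)) (x y : ℝ) : pdx f x y = fderiv ℝ (uncurry f) (x, y) (1, 0) :=
  (hasDerivAt_slice_x hf x y).deriv

lemma pdy_eq (hf : ContDiff ℝ (⊤ : ℕ∞) (Function.uncurry f)) (x y : ℝ) : pdy f x y = fderiv ℝ (uncurry f) (x, y) (0, 1) :=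
  (hasDerivAt_slice_y hf x y).deriv

lemma contDiff_pdx (hf : ContDiff ℝ (⊤ : ℕ∞) (Function.uncurry f)) : ContDiff ℝ (⊤ : ℕ∞) (uncurry (pdx f)) := by
  have h : uncurry (pdx f) = fun p : ℝ × ℝ => fderiv ℝ (uncurry f) p (1, 0) := by
    funext p
    exact pdx_eq hf p.1 p.2
  rw [h]
  exact (hf.fderiv_right ((by simp))).clm_apply contDiff_const

lemma contDiff_pdy (hf : ContDiff ℝ (⊤ : ℕ∞) (Function.uncurry f)) : ContDiff ℝ (⊤ : ℕ∞) (uncurry (pdy f)) := by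
  have h : uncurry (pdy f) = fun p : ℝ × ℝ => fderiv ℝ (uncurry f) p (0, 1) := by
    funext p
    exact pdy_eq hf p.1 p.2
  rw [h]
  exact (hf.fderiv_right ((by simp))).clm_apply contDiff_const

lemma pd_comm (hf : ContDiff ℝ (⊤ : ℕ∞) (Function.uncurry f)) (x y : ℝ) : pdx (pdy f) x y = pdy (pdx f) x y := by
  have hF : ContDiff ℝ (⊤ : ℕ∞) (fderiv ℝ (uncurry f)) := hf.fderiv_right (by simp)
  have hsymm : ∀ v w : ℝ × ℝ,
      (fderiv ℝ (fderiv ℝ (uncurry f)) (x, y)) v w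
        = (fderiv ℝ (fderiv ℝ (uncurry f)) (x, y)) w v := by
    intro v w
    exact second_derivative_symmetric
      (fun p => (hf.differentiable (by simp) p).hasFDerivAt)
      ((hF.differentiable (by simp) (x, y)).hasFDerivAt) v w
  -- pdx (pdy f) x y
  have h1 : HasDerivAt (fun t : ℝ => (t, y)) ((1 : ℝ), (0 : ℝ)) x :=
    (hasDerivAt_id x).prodMk (hasDerivAt_const x y)
  have h2 : HasDerivAt (fun t : ℝ => fderiv ℝ (uncurry f) (t, y))
      (fderiv ℝ (fderiv ℝ (uncurry f)) (x, y) (1, 0)) x :=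
    ((hF.differentiable (by simp) (x, y)).hasFDerivAt).comp_hasDerivAt x h1
  have h3 : HasDerivAt (fun t : ℝ => fderiv ℝ (uncurry f) (t, y) (0, 1))
      (fderiv ℝ (fderiv ℝ (uncurry f)) (x, y) (1, 0) (0, 1)) x := by
    have := h2.clm_apply (hasDerivAt_const x ((0 : ℝ), (1 : ℝ)))
    simpa using this
  have e1 : pdx (pdy f) x y
      = fderiv ℝ (fderiv ℝ (uncurry f)) (x, y) (1, 0) (0, 1) := by
    have hfun : (fun t : ℝ => pdy f t y)
        = fun t : ℝ => fderiv ℝ (uncurry f) (t, y) (0, 1) := by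
      funext t
      exact pdy_eq hf t y
    show deriv (fun t : ℝ => pdy f t y) x = _
    rw [hfun]
    exact h3.deriv
  -- pdy (pdx f) x y
  have h1' : HasDerivAt (fun t : ℝ => (x, t)) ((0 : ℝ), (1 : ℝ)) y :=
    (hasDerivAt_const y x).prodMk (hasDerivAt_id y)
  have h2' : HasDerivAt (fun t : ℝ => fderiv ℝ (uncurry f) (x, t))
      (fderiv ℝ (fderiv ℝ (uncurry f)) (x, y) (0, 1)) y :=
    ((hF.differentiable (by simp) (x, y)).hasFDerivAt).comp_hasDerivAt y h1'
  have h3' : HasDerivAt (fun t : ℝ => fderiv ℝ (uncurry f) (x, t) (1, 0))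
      (fderiv ℝ (fderiv ℝ (uncurry f)) (x, y) (0, 1) (1, 0)) y := by
    have := h2'.clm_apply (hasDerivAt_const y ((1 : ℝ), (0 : ℝ)))
    simpa using this
  have e2 : pdy (pdx f) x y
      = fderiv ℝ (fderiv ℝ (uncurry f)) (x, y) (0, 1) (1, 0) := by
    have hfun : (pdx f x) = fun t : ℝ => fderiv ℝ (uncurry f) (x, t) (1, 0) := by
      funext t
      exact pdx_eq hf x t
    show deriv (pdx f x) y = _
    rw [hfun]
    exact h3'.deriv
  rw [e1, e2, hsymm]

end calc1


lemma ofReal_sq_eq (a : ℝ) : ENNReal.ofReal (a ^ 2) = (‖a‖₊ : ℝ≥0∞) ^ (2 : ℝ) := by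
  rw [show (2:ℝ) = ((2:ℕ):ℝ) by norm_num, ENNReal.rpow_natCast,
    ← enorm_eq_nnnorm, Real.enorm_eq_ofReal_abs, ← ENNReal.ofReal_pow (abs_nonneg a), sq_abs]

lemma sq_int_eq {α : Type*} [MeasurableSpace α] {μ : Measure α} {g : α → ℝ}
    (hg : AEStronglyMeasurable g μ) :
    ∫ a, (g a) ^ 2 ∂μ = (∫⁻ a, (‖g a‖₊ : ℝ≥0∞) ^ (2 : ℝ) ∂μ).toReal := by
  rw [integral_eq_lintegral_of_nonneg_ae (Eventually.of_forall fun a => sq_nonneg (g a))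
    (hg.pow 2)]
  congr 1
  exact lintegral_congr fun a => ofReal_sq_eq (g a)

lemma lint_sq_ne_top {α : Type*} [MeasurableSpace α] {μ : Measure α} {g : α → ℝ}
    (hg : MemLp g 2 μ) : (∫⁻ a, (‖g a‖₊ : ℝ≥0∞) ^ (2 : ℝ) ∂μ) ≠ ⊤ := by
  have h := hg.eLpNorm_lt_top
  rw [eLpNorm_eq_lintegral_rpow_enorm_toReal (by norm_num) (by norm_num)] at h
  simp only [ENNReal.toReal_ofNat, enorm_eq_nnnorm] at h
  intro hc
  rw [hc] at h
  simp [ENNReal.top_rpow_of_pos] at h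

lemma cs2 {α : Type*} [MeasurableSpace α] {μ : Measure α} {g h : α → ℝ}
    (hg : MemLp g 2 μ) (hh : MemLp h 2 μ) :
    Integrable (fun a => g a * h a) μ ∧
      ∫ a, |g a * h a| ∂μ ≤
        Real.sqrt (∫ a, (g a) ^ 2 ∂μ) * Real.sqrt (∫ a, (h a) ^ 2 ∂μ) := by
  have hone : (1 : ℝ≥0∞) / 1 = 1 / 2 + 1 / 2 := by
    rw [ENNReal.div_add_div_same]
    norm_num
    rw [ENNReal.div_self] <;> norm_num
  have hint : Integrable (fun a => g a * h a) μ := by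
    have := hh.smul (r := 1) hg
    rw [memLp_one_iff_integrable] at this
    exact this
  refine ⟨hint, ?_⟩
  set A := ∫⁻ a, (‖g a‖₊ : ℝ≥0∞) ^ (2 : ℝ) ∂μ with hA
  set B := ∫⁻ a, (‖h a‖₊ : ℝ≥0∞) ^ (2 : ℝ) ∂μ with hB
  have hAt : A ≠ ⊤ := lint_sq_ne_top hg
  have hBt : B ≠ ⊤ := lint_sq_ne_top hh
  have habs : ∫ a, |g a * h a| ∂μ
      = (∫⁻ a, (‖g a‖₊ : ℝ≥0∞) * (‖h a‖₊ : ℝ≥0∞) ∂μ).toReal := by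
    rw [integral_eq_lintegral_of_nonneg_ae (Eventually.of_forall fun a => abs_nonneg _)
      ((hg.1.mul hh.1).norm.congr (Eventually.of_forall fun a => by
      simp [Real.norm_eq_abs, abs_mul]))]
    congr 1
    refine lintegral_congr fun a => ?_
    rw [abs_mul, ENNReal.ofReal_mul (abs_nonneg _), ← enorm_eq_nnnorm, ← enorm_eq_nnnorm, Real.enorm_eq_ofReal_abs,
      Real.enorm_eq_ofReal_abs]
  have hpq : Real.HolderConjugate 2 2 := ⟨by norm_num, by norm_num, by norm_num⟩
  have hHold := ENNReal.lintegral_mul_le_Lp_mul_Lq μ hpq hg.1.enorm hh.1.enorm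
  have hrhs_ne : A ^ (1 / (2:ℝ)) * B ^ (1 / (2:ℝ)) ≠ ⊤ := by
    exact ENNReal.mul_ne_top (by simp [ENNReal.rpow_eq_top_iff, hAt])
      (by simp [ENNReal.rpow_eq_top_iff, hBt])
  calc ∫ a, |g a * h a| ∂μ
      = (∫⁻ a, (‖g a‖₊ : ℝ≥0∞) * (‖h a‖₊ : ℝ≥0∞) ∂μ).toReal := habs
    _ ≤ (A ^ (1 / (2:ℝ)) * B ^ (1 / (2:ℝ))).toReal := ENNReal.toReal_mono hrhs_ne hHold
    _ = (A.toReal) ^ (1 / (2:ℝ)) * (B.toReal) ^ (1 / (2:ℝ)) := by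
        rw [ENNReal.toReal_mul, ← ENNReal.toReal_rpow, ← ENNReal.toReal_rpow]
    _ = Real.sqrt (∫ a, (g a) ^ 2 ∂μ) * Real.sqrt (∫ a, (h a) ^ 2 ∂μ) := by
        rw [sq_int_eq hg.1, sq_int_eq hh.1, Real.sqrt_eq_rpow, Real.sqrt_eq_rpow]

lemma tri_bound {α : Type*} [MeasurableSpace α] {μ : Measure α} {b g h : α → ℝ} {M : ℝ}
    (hM : 0 ≤ M) (hbm : AEStronglyMeasurable b μ) (hb : ∀ᵐ a ∂μ, |b a| ≤ M)
    (hg : MemLp g 2 μ) (hh : MemLp h 2 μ) :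
    Integrable (fun a => b a * (g a * h a)) μ ∧
      |∫ a, b a * (g a * h a) ∂μ| ≤
        M * (Real.sqrt (∫ a, (g a) ^ 2 ∂μ) * Real.sqrt (∫ a, (h a) ^ 2 ∂μ)) := by
  obtain ⟨hint, hcs⟩ := cs2 hg hh
  have hint2 : Integrable (fun a => b a * (g a * h a)) μ :=
    hint.bdd_mul hbm (hb.mono fun a ha => by simpa [Real.norm_eq_abs] using ha)
  refine ⟨hint2, ?_⟩
  have h1 : |∫ a, b a * (g a * h a) ∂μ| ≤ ∫ a, |b a * (g a * h a)| ∂μ := by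
    rw [← Real.norm_eq_abs]
    refine (norm_integral_le_integral_norm _).trans_eq ?_
    simp only [Real.norm_eq_abs]
  have h2 : ∫ a, |b a * (g a * h a)| ∂μ ≤ ∫ a, M * |g a * h a| ∂μ := by
    refine integral_mono_ae hint2.abs (hint.abs.const_mul M) ?_
    filter_upwards [hb] with a ha
    rw [abs_mul]
    exact mul_le_mul_of_nonneg_right ha (abs_nonneg _)
  have h3 : ∫ a, M * |g a * h a| ∂μ = M * ∫ a, |g a * h a| ∂μ := by
    simpa [smul_eq_mul] using integral_smul M (fun a => |g a * h a|)
  refine h1.trans (h2.trans ?_)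
  rw [h3]
  exact mul_le_mul_of_nonneg_left hcs hM


lemma sq2_eq (L : ℝ) (F : ℝ → ℝ → ℝ) : sq2 L F = ∫ p, (F p.1 p.2) ^ 2 ∂(muOm L) := rfl

lemma intO_eq (L : ℝ) (F : ℝ → ℝ → ℝ) : intO L F = ∫ p, F p.1 p.2 ∂(muOm L) := rfl

lemma muOm_eq (L : ℝ) :
    muOm L = (volume.restrict (Ioo 0 L)).prod (volume.restrict (Ioi 0)) := by
  rw [muOm, Omeg, Measure.prod_restrict, Measure.volume_eq_prod]

lemma supOm_spec {L : ℝ} (hL : 0 < L) {F : ℝ → ℝ → ℝ} {M : ℝ} (hbd : ∀ x y, |F x y| ≤ M) :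
    0 ≤ supOm L F ∧ ∀ x, x ∈ Icc 0 L → ∀ y, y ∈ Ici (0:ℝ) → |F x y| ≤ supOm L F := by
  have hM0 : (0:ℝ) ≤ max M 0 := le_max_right _ _
  have hgle : ∀ x, (⨆ y ∈ Ici (0:ℝ), |F x y|) ≤ max M 0 := by
    intro x
    exact Real.iSup_le (fun y => Real.iSup_le (fun _ => le_max_of_le_left (hbd x y)) hM0) hM0
  have hgge : ∀ x, ∀ y ∈ Ici (0:ℝ), |F x y| ≤ ⨆ y ∈ Ici (0:ℝ), |F x y| := by
    intro x y hy
    have hb : BddAbove (range fun y => ⨆ _ : y ∈ Ici (0:ℝ), |F x y|) := by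
      refine ⟨max M 0, ?_⟩
      rintro _ ⟨y', rfl⟩
      exact Real.iSup_le (fun _ => le_max_of_le_left (hbd x y')) hM0
    refine le_trans ?_ (le_ciSup hb y)
    rw [ciSup_pos hy]
  have hb2 : BddAbove (range fun x => ⨆ _ : x ∈ Icc (0:ℝ) L, ⨆ y ∈ Ici (0:ℝ), |F x y|) := by
    refine ⟨max M 0, ?_⟩
    rintro _ ⟨x, rfl⟩
    exact Real.iSup_le (fun _ => hgle x) hM0
  have hsup_ge : ∀ x ∈ Icc (0:ℝ) L, (⨆ y ∈ Ici (0:ℝ), |F x y|) ≤ supOm L F := by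
    intro x hx
    rw [supOm]
    refine le_trans ?_ (le_ciSup hb2 x)
    rw [ciSup_pos hx]
  constructor
  · exact le_trans (abs_nonneg (F 0 0)) (le_trans (hgge 0 0 Set.self_mem_Ici) (hsup_ge 0 ⟨le_rfl, hL.le⟩))
  · intro x hx y hy
    exact (hgge x y hy).trans (hsup_ge x hx)

lemma sq_setInt_le {x L : ℝ} (hx : 0 ≤ x) (hxL : x ≤ L) {q : ℝ → ℝ} (hq : Continuous q) :
    (∫ t in Ioc 0 x, q t) ^ 2 ≤ x * ∫ t in Ioc 0 x, (q t) ^ 2 := by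
  haveI : IsFiniteMeasure (volume.restrict (Ioc (0:ℝ) x)) := by
    constructor
    rw [Measure.restrict_apply_univ]
    simp [Real.volume_Ioc]
  obtain ⟨C, hC⟩ : ∃ C, ∀ t ∈ Ioc (0:ℝ) x, ‖q t‖ ≤ C := by
    obtain ⟨C, hC⟩ := (isCompact_Icc : IsCompact (Icc (0:ℝ) x)).exists_bound_of_continuousOn
      hq.continuousOn
    exact ⟨C, fun t ht => hC t (Ioc_subset_Icc_self ht)⟩
  have hmq : MemLp q 2 (volume.restrict (Ioc 0 x)) :=
    MemLp.of_bound hq.aestronglyMeasurable C ((ae_restrict_mem measurableSet_Ioc).mono hC)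
  have hm1 : MemLp (fun _ : ℝ => (1:ℝ)) 2 (volume.restrict (Ioc 0 x)) :=
    MemLp.of_bound aestronglyMeasurable_const 1 (Eventually.of_forall (by simp))
  obtain ⟨_, hcs⟩ := cs2 hmq hm1
  have h1 : (∫ _t in Ioc (0:ℝ) x, ((1:ℝ)) ^ 2) = x := by
    simp [Real.volume_Ioc, hx]
  have habs : |∫ t in Ioc (0:ℝ) x, q t| ≤ Real.sqrt (∫ t in Ioc 0 x, (q t) ^ 2) * Real.sqrt x := by
    have h2 : |∫ t in Ioc (0:ℝ) x, q t| ≤ ∫ t in Ioc (0:ℝ) x, |q t * 1| := by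
      rw [← Real.norm_eq_abs]
      refine (norm_integral_le_integral_norm _).trans_eq ?_
      simp only [Real.norm_eq_abs, mul_one]
    refine h2.trans (hcs.trans ?_)
    rw [h1]
  calc (∫ t in Ioc (0:ℝ) x, q t) ^ 2 = |∫ t in Ioc (0:ℝ) x, q t| ^ 2 := (sq_abs _).symm
    _ ≤ (Real.sqrt (∫ t in Ioc 0 x, (q t) ^ 2) * Real.sqrt x) ^ 2 := by
        exact pow_le_pow_left₀ (abs_nonneg _) habs 2
    _ = (∫ t in Ioc 0 x, (q t) ^ 2) * x := by
        rw [mul_pow, Real.sq_sqrt (integral_nonneg fun t => sq_nonneg _), Real.sq_sqrt hx]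
    _ = x * ∫ t in Ioc 0 x, (q t) ^ 2 := mul_comm _ _

lemma slice_bound {L : ℝ} (hL : 0 < L) {f : ℝ → ℝ → ℝ} (hf : ContDiff ℝ (⊤ : ℕ∞) (uncurry f))
    (h0 : ∀ y, f 0 y = 0) {ρ : ℝ → ℝ} (hρ : Continuous ρ) {x : ℝ} (hx : x ∈ Icc 0 L) (y : ℝ) :
    (ρ y * f x y) ^ 2 ≤ L * ∫ t in Ioo 0 L, (ρ y * pdx f t y) ^ 2 := by
  have hcont : Continuous (fun t => pdx f t y) :=
    ((contDiff_pdx hf).continuous).comp (continuous_id.prodMk continuous_const)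
  have hftc : ∫ t in (0:ℝ)..x, pdx f t y = f x y := by
    have h := intervalIntegral.integral_eq_sub_of_hasDerivAt
      (f := fun s => f s y) (f' := fun t => pdx f t y) (a := 0) (b := x)
      (fun t _ => ((contDiff_slice_x hf y).differentiable (by simp) t).hasDerivAt)
      (hcont.intervalIntegrable 0 x)
    rw [h, h0 y, sub_zero]
  have key : ρ y * f x y = ∫ t in Ioc (0:ℝ) x, ρ y * pdx f t y := by
    rw [← hftc, intervalIntegral.integral_of_le hx.1]
    have h := integral_smul (μ := volume.restrict (Ioc (0:ℝ) x)) (ρ y) (fun t => pdx f t y)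
    simp only [smul_eq_mul] at h
    exact h.symm
  have hq : Continuous (fun t => ρ y * pdx f t y) := continuous_const.mul hcont
  have h1 : (ρ y * f x y) ^ 2 ≤ x * ∫ t in Ioc (0:ℝ) x, (ρ y * pdx f t y) ^ 2 := by
    rw [key]
    exact sq_setInt_le hx.1 hx.2 hq
  have hIoL : IntegrableOn (fun t => (ρ y * pdx f t y) ^ 2) (Ioo 0 L) volume :=
    ((hq.pow 2).integrableOn_Icc).mono_set Ioo_subset_Icc_self
  have h2 : ∫ t in Ioc (0:ℝ) x, (ρ y * pdx f t y) ^ 2 ≤ ∫ t in Ioo 0 L, (ρ y * pdx f t y) ^ 2 := by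
    rw [integral_Ioc_eq_integral_Ioo]
    refine setIntegral_mono_set hIoL (Eventually.of_forall fun t => sq_nonneg _) ?_
    exact HasSubset.Subset.eventuallyLE (Ioo_subset_Ioo le_rfl hx.2)
  refine h1.trans ?_
  exact mul_le_mul hx.2 h2 (integral_nonneg fun t => sq_nonneg _) hL.le

lemma measurableSet_Omeg (L : ℝ) : MeasurableSet (Omeg L) :=
  measurableSet_Ioo.prod measurableSet_Ioi

lemma ae_mem_Omeg (L : ℝ) : ∀ᵐ p ∂(muOm L), p ∈ Omeg L := by
  rw [muOm]
  exact ae_restrict_mem (measurableSet_Omeg L)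

lemma poincare {L : ℝ} (hL : 0 < L) {f : ℝ → ℝ → ℝ} (hf : ContDiff ℝ (⊤ : ℕ∞) (uncurry f))
    (h0 : ∀ y, f 0 y = 0) {ρ : ℝ → ℝ} (hρ : Continuous ρ)
    (hmem : MemLp (fun p : ℝ × ℝ => ρ p.2 * pdx f p.1 p.2) 2 (muOm L)) :
    MemLp (fun p : ℝ × ℝ => ρ p.2 * f p.1 p.2) 2 (muOm L) ∧
      (∫ p, (ρ p.2 * f p.1 p.2) ^ 2 ∂(muOm L)) ≤
        L ^ 2 * ∫ p, (ρ p.2 * pdx f p.1 p.2) ^ 2 ∂(muOm L) ∧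
    (MemLp (fun y => ρ y * f L y) 2 (volume.restrict (Ioi (0:ℝ))) ∧
      (∫ y in Ioi (0:ℝ), (ρ y * f L y) ^ 2) ≤
        L * ∫ p, (ρ p.2 * pdx f p.1 p.2) ^ 2 ∂(muOm L)) := by
  have hqc : Continuous (fun p : ℝ × ℝ => ρ p.2 * pdx f p.1 p.2) :=
    (hρ.comp continuous_snd).mul (contDiff_pdx hf).continuous
  have hfc : Continuous (fun p : ℝ × ℝ => ρ p.2 * f p.1 p.2) :=
    (hρ.comp continuous_snd).mul hf.continuous
  have hgc : Continuous (fun y => ρ y * f L y) :=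
    hρ.mul (hf.continuous.comp (continuous_const.prodMk continuous_id))
  set N : ℝ × ℝ → ℝ≥0∞ := fun z => ENNReal.ofReal ((ρ z.2 * pdx f z.1 z.2) ^ 2) with hNdef
  have hNmeas : Measurable N := ENNReal.measurable_ofReal.comp (hqc.pow 2).measurable
  set W : ℝ → ℝ≥0∞ := fun y => ∫⁻ t in Ioo (0:ℝ) L, N (t, y) with hWdef
  have hWmeas : Measurable W := by
    have h1 : Measurable (fun z : ℝ × ℝ => N (z.2, z.1)) := hNmeas.comp measurable_swap
    exact h1.lintegral_prod_right'
  have hIntN : ∀ y : ℝ, IntegrableOn (fun t => (ρ y * pdx f t y) ^ 2) (Ioo 0 L) volume := by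
    intro y
    have hc : Continuous (fun t => (ρ y * pdx f t y) ^ 2) :=
      (continuous_const.mul ((contDiff_pdx hf).continuous.comp
        (continuous_id.prodMk continuous_const))).pow 2
    exact (hc.integrableOn_Icc).mono_set Ioo_subset_Icc_self
  have hWofReal : ∀ y : ℝ,
      ENNReal.ofReal (∫ t in Ioo (0:ℝ) L, (ρ y * pdx f t y) ^ 2) = W y := by
    intro y
    rw [ofReal_integral_eq_lintegral_ofReal (hIntN y)
      (Eventually.of_forall fun t => sq_nonneg _)]
  have hkey : ∀ x ∈ Icc (0:ℝ) L, ∀ y : ℝ,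
      ENNReal.ofReal ((ρ y * f x y) ^ 2) ≤ ENNReal.ofReal L * W y := by
    intro x hx y
    have hb := slice_bound hL hf h0 hρ hx y
    calc ENNReal.ofReal ((ρ y * f x y) ^ 2)
        ≤ ENNReal.ofReal (L * ∫ t in Ioo (0:ℝ) L, (ρ y * pdx f t y) ^ 2) :=
          ENNReal.ofReal_le_ofReal hb
      _ = ENNReal.ofReal L * ENNReal.ofReal (∫ t in Ioo (0:ℝ) L, (ρ y * pdx f t y) ^ 2) :=
          ENNReal.ofReal_mul hL.le
      _ = ENNReal.ofReal L * W y := by rw [hWofReal y]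
  set B := ∫⁻ p, N p ∂(muOm L) with hBdef
  have hBN : B = ∫⁻ p, (‖ρ p.2 * pdx f p.1 p.2‖₊ : ℝ≥0∞) ^ (2:ℝ) ∂(muOm L) :=
    lintegral_congr fun p => ofReal_sq_eq _
  have hBne : B ≠ ⊤ := by

    rw [hBN]
    exact lint_sq_ne_top hmem
  have hWint : ∫⁻ y in Ioi (0:ℝ), W y = B := by
    rw [hBdef, muOm_eq, lintegral_prod_symm N hNmeas.aemeasurable]
  have hB2 : ∫ p, (ρ p.2 * pdx f p.1 p.2) ^ 2 ∂(muOm L) = B.toReal := by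
    rw [hBN, sq_int_eq hqc.aestronglyMeasurable]
  -- interior piece
  have hmain : ∫⁻ p, ENNReal.ofReal ((ρ p.2 * f p.1 p.2) ^ 2) ∂(muOm L)
      ≤ ENNReal.ofReal L * (ENNReal.ofReal L * B) := by
    have h1 : ∫⁻ p, ENNReal.ofReal ((ρ p.2 * f p.1 p.2) ^ 2) ∂(muOm L)
        ≤ ∫⁻ p, ENNReal.ofReal L * W p.2 ∂(muOm L) := by
      refine lintegral_mono_ae ?_
      filter_upwards [ae_mem_Omeg L] with p hp
      have hp' : p.1 ∈ Ioo (0:ℝ) L ∧ p.2 ∈ Ioi (0:ℝ) := hp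
      exact hkey p.1 (Ioo_subset_Icc_self hp'.1) p.2
    have h2 : ∫⁻ p, ENNReal.ofReal L * W p.2 ∂(muOm L)
        = ENNReal.ofReal L * ∫⁻ p, W p.2 ∂(muOm L) :=
      lintegral_const_mul _ (hWmeas.comp measurable_snd)
    have h3 : ∫⁻ p, W p.2 ∂(muOm L) = ENNReal.ofReal L * B := by
      rw [muOm_eq, lintegral_prod (fun p : ℝ × ℝ => W p.2) ((hWmeas.comp measurable_snd).aemeasurable)]
      simp only [lintegral_const]
      rw [hWint, Measure.restrict_apply_univ, Real.volume_Ioo, sub_zero, mul_comm]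
    rw [h2, h3] at h1
    exact h1
  have hne1 : ENNReal.ofReal L * (ENNReal.ofReal L * B) ≠ ⊤ :=
    ENNReal.mul_ne_top ENNReal.ofReal_ne_top (ENNReal.mul_ne_top ENNReal.ofReal_ne_top hBne)
  have hmemI : MemLp (fun p : ℝ × ℝ => ρ p.2 * f p.1 p.2) 2 (muOm L) := by
    refine ⟨hfc.aestronglyMeasurable, ?_⟩
    rw [eLpNorm_eq_lintegral_rpow_enorm_toReal (by norm_num) (by norm_num)]
    refine ENNReal.rpow_lt_top_of_nonneg (by norm_num) ?_
    have h4 : ∫⁻ p, (‖ρ p.2 * f p.1 p.2‖₊ : ℝ≥0∞) ^ (2:ℝ) ∂(muOm L)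
        ≤ ENNReal.ofReal L * (ENNReal.ofReal L * B) :=
      le_trans (le_of_eq (lintegral_congr fun p => (ofReal_sq_eq _).symm)) hmain
    simp only [ENNReal.toReal_ofNat]
    exact ne_top_of_le_ne_top hne1 h4
  have hIneqI : (∫ p, (ρ p.2 * f p.1 p.2) ^ 2 ∂(muOm L)) ≤
      L ^ 2 * ∫ p, (ρ p.2 * pdx f p.1 p.2) ^ 2 ∂(muOm L) := by
    have e1 : ∫ p, (ρ p.2 * f p.1 p.2) ^ 2 ∂(muOm L)
        = (∫⁻ p, ENNReal.ofReal ((ρ p.2 * f p.1 p.2) ^ 2) ∂(muOm L)).toReal := by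
      rw [integral_eq_lintegral_of_nonneg_ae (Eventually.of_forall fun p => sq_nonneg _)
        (hfc.pow 2).aestronglyMeasurable]
    rw [e1, hB2]
    refine le_trans (ENNReal.toReal_mono hne1 hmain) ?_
    rw [ENNReal.toReal_mul, ENNReal.toReal_mul, ENNReal.toReal_ofReal hL.le]
    ring_nf
    exact le_refl _
  -- boundary piece
  have hmainB : ∫⁻ y in Ioi (0:ℝ), ENNReal.ofReal ((ρ y * f L y) ^ 2)
      ≤ ENNReal.ofReal L * B := by
    have h1 : ∫⁻ y in Ioi (0:ℝ), ENNReal.ofReal ((ρ y * f L y) ^ 2)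
        ≤ ∫⁻ y in Ioi (0:ℝ), ENNReal.ofReal L * W y :=
      lintegral_mono fun y => hkey L ⟨hL.le, le_rfl⟩ y
    have h2 : ∫⁻ y in Ioi (0:ℝ), ENNReal.ofReal L * W y
        = ENNReal.ofReal L * ∫⁻ y in Ioi (0:ℝ), W y :=
      lintegral_const_mul _ hWmeas
    rw [h2, hWint] at h1
    exact h1
  have hne2 : ENNReal.ofReal L * B ≠ ⊤ :=
    ENNReal.mul_ne_top ENNReal.ofReal_ne_top hBne
  have hmemB : MemLp (fun y => ρ y * f L y) 2 (volume.restrict (Ioi (0:ℝ))) := by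
    refine ⟨hgc.aestronglyMeasurable, ?_⟩
    rw [eLpNorm_eq_lintegral_rpow_enorm_toReal (by norm_num) (by norm_num)]
    refine ENNReal.rpow_lt_top_of_nonneg (by norm_num) ?_
    have h4 : ∫⁻ y in Ioi (0:ℝ), (‖ρ y * f L y‖₊ : ℝ≥0∞) ^ (2:ℝ)
        ≤ ENNReal.ofReal L * B :=
      le_trans (le_of_eq (lintegral_congr fun y => (ofReal_sq_eq _).symm)) hmainB
    simp only [ENNReal.toReal_ofNat]
    exact ne_top_of_le_ne_top hne2 h4
  have hIneqB : (∫ y in Ioi (0:ℝ), (ρ y * f L y) ^ 2) ≤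
      L * ∫ p, (ρ p.2 * pdx f p.1 p.2) ^ 2 ∂(muOm L) := by
    have e1 : ∫ y in Ioi (0:ℝ), (ρ y * f L y) ^ 2
        = (∫⁻ y in Ioi (0:ℝ), ENNReal.ofReal ((ρ y * f L y) ^ 2)).toReal := by
      rw [integral_eq_lintegral_of_nonneg_ae (Eventually.of_forall fun y => sq_nonneg _)
        (hgc.pow 2).aestronglyMeasurable]
    rw [e1, hB2]
    refine le_trans (ENNReal.toReal_mono hne2 hmainB) ?_
    rw [ENNReal.toReal_mul, ENNReal.toReal_ofReal hL.le]
  exact ⟨hmemI, hIneqI, hmemB, hIneqB⟩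

lemma hasDerivAt_pdy_slice {f : ℝ → ℝ → ℝ} (hf : ContDiff ℝ (⊤ : ℕ∞) (uncurry f)) (x y : ℝ) :
    HasDerivAt (f x) (pdy f x y) y :=
  (((contDiff_slice_y hf x).differentiable (by simp)) y).hasDerivAt

lemma hasDerivAt_pdx_slice' {f : ℝ → ℝ → ℝ} (hf : ContDiff ℝ (⊤ : ℕ∞) (uncurry f)) (x y : ℝ) :
    HasDerivAt (fun t => f t y) (pdx f x y) x :=
  (((contDiff_slice_x hf y).differentiable (by simp)) x).hasDerivAt

lemma pdy_wmul {u : ℝ → ℝ → ℝ} (hu : ContDiff ℝ (⊤ : ℕ∞) (uncurry u)) (x y : ℝ) :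
    pdy (wmul u) x y = (pdy u x y * y ^ 2 + u x y * (2 * y)) * (1 - x) := by
  have h1 : HasDerivAt (u x) (pdy u x y) y := hasDerivAt_pdy_slice hu x y
  have h2 : HasDerivAt (fun s : ℝ => s ^ 2) (2 * y) y := by
    simpa using hasDerivAt_pow 2 y
  have H := ((h1.mul h2).mul_const (1 - x))
  show deriv (fun s => u x s * s ^ 2 * (1 - x)) y = _
  exact H.deriv

lemma pdx_wmul {u : ℝ → ℝ → ℝ} (hu : ContDiff ℝ (⊤ : ℕ∞) (uncurry u)) (x y : ℝ) :
    pdx (wmul u) x y = (pdx u x y * (1 - x) - u x y) * y ^ 2 := by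
  have h1 : HasDerivAt (fun t => u t y * y ^ 2) (pdx u x y * y ^ 2) x :=
    (hasDerivAt_pdx_slice' hu x y).mul_const (y ^ 2)
  have h2 : HasDerivAt (fun t : ℝ => 1 - t) (-1) x := by
    simpa using (hasDerivAt_id x).const_sub 1
  have H := h1.mul h2
  have e : pdx (wmul u) x y = deriv (fun t => u t y * y ^ 2 * (1 - t)) x := rfl
  rw [e]; refine H.deriv.trans ?_
  ring

lemma pdy_Nu_eq {ε γ : ℝ} {ub vb : ℝ → ℝ → ℝ} (hub : ContDiff ℝ (⊤ : ℕ∞) (uncurry ub))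
    (hvb : ContDiff ℝ (⊤ : ℕ∞) (uncurry vb))
    (hdiv : ∀ x y, pdx ub x y + pdy vb x y = 0) (x y : ℝ) :
    pdy (Nu ε γ ub vb) x y = ε ^ ((1:ℝ)/2 + γ) *
      (ub x y * pdx (pdy ub) x y + vb x y * pdy (pdy ub) x y) := by
  have hA : HasDerivAt (ub x) (pdy ub x y) y := hasDerivAt_pdy_slice hub x y
  have hB : HasDerivAt (fun s => pdx ub x s) (pdy (pdx ub) x y) y :=
    hasDerivAt_pdy_slice (contDiff_pdx hub) x y
  have hC : HasDerivAt (vb x) (pdy vb x y) y := hasDerivAt_pdy_slice hvb x y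
  have hD : HasDerivAt (fun s => pdy ub x s) (pdy (pdy ub) x y) y :=
    hasDerivAt_pdy_slice (contDiff_pdy hub) x y
  have H := ((hA.mul hB).add (hC.mul hD)).const_mul (ε ^ ((1:ℝ)/2 + γ))
  have e : pdy (Nu ε γ ub vb) x y = deriv (fun s =>
      ε ^ ((1:ℝ)/2 + γ) * (ub x s * pdx ub x s + vb x s * pdy ub x s)) y := rfl
  rw [e]; refine H.deriv.trans ?_
  have hcomm : pdy (pdx ub) x y = pdx (pdy ub) x y := (pd_comm hub x y).symm
  have hdiv' : pdy vb x y = -pdx ub x y := by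
    have := hdiv x y
    linarith
  rw [hcomm, hdiv']
  ring

lemma pdy_Nv_eq {ε γ : ℝ} {ub vb : ℝ → ℝ → ℝ} (hub : ContDiff ℝ (⊤ : ℕ∞) (uncurry ub))
    (hvb : ContDiff ℝ (⊤ : ℕ∞) (uncurry vb))
    (hdiv : ∀ x y, pdx ub x y + pdy vb x y = 0) (x y : ℝ) :
    pdy (Nv ε γ ub vb) x y = ε ^ ((1:ℝ)/2 + γ) *
      (pdy ub x y * pdx vb x y - ub x y * pdx (pdx ub) x y + pdx ub x y * pdx ub x y
        - vb x y * pdx (pdy ub) x y) := by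
  have hA : HasDerivAt (ub x) (pdy ub x y) y := hasDerivAt_pdy_slice hub x y
  have hB : HasDerivAt (fun s => pdx vb x s) (pdy (pdx vb) x y) y :=
    hasDerivAt_pdy_slice (contDiff_pdx hvb) x y
  have hC : HasDerivAt (vb x) (pdy vb x y) y := hasDerivAt_pdy_slice hvb x y
  have hD : HasDerivAt (fun s => pdy vb x s) (pdy (pdy vb) x y) y :=
    hasDerivAt_pdy_slice (contDiff_pdy hvb) x y
  have H := ((hA.mul hB).add (hC.mul hD)).const_mul (ε ^ ((1:ℝ)/2 + γ))
  have e : pdy (Nv ε γ ub vb) x y = deriv (fun s =>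
      ε ^ ((1:ℝ)/2 + γ) * (ub x s * pdx vb x s + vb x s * pdy vb x s)) y := rfl
  rw [e]; refine H.deriv.trans ?_
  -- identities
  have hfun : pdy vb = fun a b => -pdx ub a b := by
    funext a b
    have := hdiv a b
    linarith
  have h1 : pdy (pdx vb) x y = pdx (pdy vb) x y := (pd_comm hvb x y).symm
  have h2 : pdx (pdy vb) x y = -pdx (pdx ub) x y := by
    rw [hfun]
    show deriv (fun t => -pdx ub t y) x = _
    refine deriv.neg.trans ?_
    rfl
  have h3 : pdy vb x y = -pdx ub x y := by rw [hfun]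
  have h4 : pdy (pdy vb) x y = -pdx (pdy ub) x y := by
    rw [hfun]
    show deriv (fun s => -pdx ub x s) y = _
    refine deriv.neg.trans ?_
    show -pdy (pdx ub) x y = -pdx (pdy ub) x y
    rw [pd_comm hub x y]
  rw [h1, h2, h3, h4]
  ring

lemma ibp_x {L : ℝ} (hL : 0 < L) {V ψ : ℝ → ℝ → ℝ} (hV : ContDiff ℝ (⊤ : ℕ∞) (uncurry V))
    (hψ : ContDiff ℝ (⊤ : ℕ∞) (uncurry ψ)) (hV0 : ∀ y, V 0 y = 0) (y : ℝ) :
    ∫ t in Ioo (0:ℝ) L, (pdx V t y * ψ t y + V t y * pdx ψ t y) = V L y * ψ L y := by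
  have hd : ∀ t ∈ uIcc (0:ℝ) L, HasDerivAt (fun s => V s y * ψ s y)
      (pdx V t y * ψ t y + V t y * pdx ψ t y) t := fun t _ =>
    (hasDerivAt_pdx_slice' hV t y).mul (hasDerivAt_pdx_slice' hψ t y)
  have hcV : Continuous (fun t => pdx V t y) :=
    (contDiff_pdx hV).continuous.comp (continuous_id.prodMk continuous_const)
  have hcV' : Continuous (fun t => V t y) :=
    hV.continuous.comp (continuous_id.prodMk continuous_const)
  have hcψ : Continuous (fun t => ψ t y) :=
    hψ.continuous.comp (continuous_id.prodMk continuous_const)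
  have hcψ' : Continuous (fun t => pdx ψ t y) :=
    (contDiff_pdx hψ).continuous.comp (continuous_id.prodMk continuous_const)
  have hcont : Continuous (fun t => pdx V t y * ψ t y + V t y * pdx ψ t y) :=
    (hcV.mul hcψ).add (hcV'.mul hcψ')
  have h := intervalIntegral.integral_eq_sub_of_hasDerivAt hd (hcont.intervalIntegrable 0 L)
  rw [intervalIntegral.integral_of_le hL.le, integral_Ioc_eq_integral_Ioo] at h
  rw [h, hV0 y]
  ring

lemma pdx_V_eq {ub vb : ℝ → ℝ → ℝ} (hub : ContDiff ℝ (⊤ : ℕ∞) (uncurry ub))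
    (hvb : ContDiff ℝ (⊤ : ℕ∞) (uncurry vb)) (x y : ℝ) :
    pdx (fun a b => pdy ub a b * vb a b + ub a b * pdx ub a b) x y
      = pdx (pdy ub) x y * vb x y + pdy ub x y * pdx vb x y
        + (pdx ub x y * pdx ub x y + ub x y * pdx (pdx ub) x y) := by
  have h1 : HasDerivAt (fun t => pdy ub t y) (pdx (pdy ub) x y) x :=
    hasDerivAt_pdx_slice' (contDiff_pdy hub) x y
  have h2 : HasDerivAt (fun t => vb t y) (pdx vb x y) x := hasDerivAt_pdx_slice' hvb x y
  have h3 : HasDerivAt (fun t => ub t y) (pdx ub x y) x := hasDerivAt_pdx_slice' hub x y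
  have h4 : HasDerivAt (fun t => pdx ub t y) (pdx (pdx ub) x y) x :=
    hasDerivAt_pdx_slice' (contDiff_pdx hub) x y
  have H := (h1.mul h2).add (h3.mul h4)
  exact H.deriv

lemma pdx_psi_eq {u : ℝ → ℝ → ℝ} (hu : ContDiff ℝ (⊤ : ℕ∞) (uncurry u)) (x y : ℝ) :
    pdx (fun a b => (pdx u a b * (1 - a) - u a b) * b ^ 2) x y
      = (pdx (pdx u) x y * (1 - x) - 2 * pdx u x y) * y ^ 2 := by
  have h1 : HasDerivAt (fun t => pdx u t y) (pdx (pdx u) x y) x :=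
    hasDerivAt_pdx_slice' (contDiff_pdx hu) x y
  have h2 : HasDerivAt (fun t : ℝ => 1 - t) (-1) x := by
    simpa using (hasDerivAt_id x).const_sub 1
  have h3 : HasDerivAt (fun t => u t y) (pdx u x y) x := hasDerivAt_pdx_slice' hu x y
  have H := ((h1.mul h2).sub h3).mul_const (y ^ 2)
  have e : pdx (fun a b => (pdx u a b * (1 - a) - u a b) * b ^ 2) x y
      = deriv (fun t => (pdx u t y * (1 - t) - u t y) * y ^ 2) x := rfl
  rw [e]; refine H.deriv.trans ?_
  ring

lemma mul3_le {a b c A B C : ℝ} (ha : 0 ≤ a) (hb : 0 ≤ b) (hc : 0 ≤ c)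
    (hA : a ≤ A) (hB : b ≤ B) (hC : c ≤ C) : a * (b * c) ≤ A * (B * C) :=
  mul_le_mul hA (mul_le_mul hB hC hc (hb.trans hB)) (mul_nonneg hb hc) (ha.trans hA)

lemma tri_spec {L : ℝ} {c M : ℝ} (hc : 0 ≤ c) (hM : 0 ≤ M) {b : ℝ × ℝ → ℝ} {g h : ℝ → ℝ → ℝ}
    (hbC : AEStronglyMeasurable b (muOm L))
    (hbB : ∀ᵐ p ∂(muOm L), |b p| ≤ M)
    (hg : MemLp (fun p : ℝ × ℝ => g p.1 p.2) 2 (muOm L))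
    (hh : MemLp (fun p : ℝ × ℝ => h p.1 p.2) 2 (muOm L)) :
    Integrable (fun p : ℝ × ℝ => c * b p * (g p.1 p.2 * h p.1 p.2)) (muOm L) ∧
      |∫ p, c * b p * (g p.1 p.2 * h p.1 p.2) ∂(muOm L)|
        ≤ c * M * (Real.sqrt (sq2 L g) * Real.sqrt (sq2 L h)) := by
  have hbB' : ∀ᵐ p ∂(muOm L), |c * b p| ≤ c * M := by
    filter_upwards [hbB] with p hp
    rw [abs_mul, abs_of_nonneg hc]
    exact mul_le_mul_of_nonneg_left hp hc
  have H := tri_bound (mul_nonneg hc hM) (aestronglyMeasurable_const.mul hbC) hbB' hg hh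
  rw [sq2_eq L g, sq2_eq L h]
  exact H

lemma tri_specB {c M : ℝ} (hc : 0 ≤ c) (hM : 0 ≤ M) {b : ℝ → ℝ} {g h : ℝ → ℝ}
    (hbC : AEStronglyMeasurable b (volume.restrict (Ioi (0:ℝ))))
    (hbB : ∀ᵐ y ∂(volume.restrict (Ioi (0:ℝ))), |b y| ≤ M)
    (hg : MemLp g 2 (volume.restrict (Ioi (0:ℝ))))
    (hh : MemLp h 2 (volume.restrict (Ioi (0:ℝ)))) :
    Integrable (fun y => c * b y * (g y * h y)) (volume.restrict (Ioi (0:ℝ))) ∧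
      |∫ y, c * b y * (g y * h y) ∂(volume.restrict (Ioi (0:ℝ)))|
        ≤ c * M * (Real.sqrt (sqB g) * Real.sqrt (sqB h)) := by
  have hbB' : ∀ᵐ y ∂(volume.restrict (Ioi (0:ℝ))), |c * b y| ≤ c * M := by
    filter_upwards [hbB] with y hy
    rw [abs_mul, abs_of_nonneg hc]
    exact mul_le_mul_of_nonneg_left hy hc
  have H := tri_bound (mul_nonneg hc hM) (aestronglyMeasurable_const.mul hbC) hbB' hg hh
  exact H

set_option maxHeartbeats 4000000 in
/-- **Nonlinear estimate for the weighted multiplier (Lemma 6.1).**  For any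
[u,v], [ū,v̄] ∈ X, with w(x) = 1 − x,
|∫ ∂_y N^u(ū,v̄) ∂_y(u y² w)| + |∫ ∂_y N^v(ū,v̄) ε ∂_x(u y² w)|
  ≤ C ε^{γ/2} ‖ū,v̄‖²_X ‖u,v‖_X. -/
theorem nonlinear_weighted_estimate :
    ∃ C > 0,
      ∀ (L ε γ : ℝ) (u v ub vb : ℝ → ℝ → ℝ),
        0 < L → L ≤ 1 → 0 < ε → ε < 1 → 0 < γ → γ < 1/4 →
        MemX L ε u v →
        MemX L ε ub vb →
        |intO L (fun x y => pdy (Nu ε γ ub vb) x y * pdy (wmul u) x y)|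
          + |intO L (fun x y => pdy (Nv ε γ ub vb) x y * (ε * pdx (wmul u) x y))| ≤
        C * ε ^ (γ / 2) * (normX L ε γ ub vb) ^ 2 * normX L ε γ u v := by
  refine ⟨100, by norm_num, ?_⟩
  intro L ε γ u v ub vb hL hL1 hε hε1 hγ hγ14 hu hub
  have hsE : (0:ℝ) < Real.sqrt ε := Real.sqrt_pos.mpr hε
  have hsE1 : Real.sqrt ε ≤ 1 := by
    rw [show (1:ℝ) = Real.sqrt 1 by simp]
    exact Real.sqrt_le_sqrt hε1.le
  have hege : (0:ℝ) < ε ^ (γ / 2) := Real.rpow_pos_of_pos hε _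
  obtain ⟨Mu, hMu⟩ := hu.bdd
  obtain ⟨Mb, hMb⟩ := hub.bdd
  obtain ⟨hSUnn, hSU⟩ := supOm_spec hL (F := u) (fun x y => (hMu x y).1)
  obtain ⟨hSVnn, hSV⟩ := supOm_spec hL (F := v) (fun x y => (hMu x y).2)
  obtain ⟨hSUbnn, hSUb⟩ := supOm_spec hL (F := ub) (fun x y => (hMb x y).1)
  obtain ⟨hSVbnn, hSVb⟩ := supOm_spec hL (F := vb) (fun x y => (hMb x y).2)
  have hsq2nn : ∀ F : ℝ → ℝ → ℝ, 0 ≤ sq2 L F := fun F => integral_nonneg fun p => sq_nonneg _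
  have hsqBnn : ∀ F : ℝ → ℝ, 0 ≤ sqB F := fun F => integral_nonneg fun y => sq_nonneg _
  -- decomposition of the two norms
  have hXdec : normX L ε γ u v = normX1 L ε u v
      + ε ^ (γ / 2) * (supOm L u + Real.sqrt ε * supOm L v)
      + Real.sqrt (sqB (fun y => y * pdy u L y) + ε * sqB (fun y => y * pdx u L y)
          + ε * sqB (fun y => pdx u L y)) := rfl
  have hYdec : normX L ε γ ub vb = normX1 L ε ub vb
      + ε ^ (γ / 2) * (supOm L ub + Real.sqrt ε * supOm L vb)
      + Real.sqrt (sqB (fun y => y * pdy ub L y) + ε * sqB (fun y => y * pdx ub L y)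
          + ε * sqB (fun y => pdx ub L y)) := rfl
  have hX1dec : ∀ w z : ℝ → ℝ → ℝ, normX1 L ε w z
      = Real.sqrt (sq2 L (fun x y => y * pdy w x y))
        + Real.sqrt (ε * sq2 L (fun x y => y * pdx w x y))
        + Real.sqrt (sq2 L (pdy z) + ε * sq2 L (pdx z))
        + Real.sqrt (sq2 L (fun x y => y * pdy (pdy w) x y)
            + ε * sq2 L (fun x y => y * pdx (pdy w) x y)
            + ε ^ 2 * sq2 L (fun x y => y * pdx (pdx w) x y)) := fun w z => rfl
  have hX1nn : ∀ w z : ℝ → ℝ → ℝ, 0 ≤ normX1 L ε w z := by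
    intro w z
    rw [hX1dec]
    have := Real.sqrt_nonneg (sq2 L (fun x y => y * pdy w x y))
    have := Real.sqrt_nonneg (ε * sq2 L (fun x y => y * pdx w x y))
    have := Real.sqrt_nonneg (sq2 L (pdy z) + ε * sq2 L (pdx z))
    have := Real.sqrt_nonneg (sq2 L (fun x y => y * pdy (pdy w) x y)
        + ε * sq2 L (fun x y => y * pdx (pdy w) x y)
        + ε ^ 2 * sq2 L (fun x y => y * pdx (pdx w) x y))
    linarith
  have hXnn : 0 ≤ normX L ε γ u v := by
    rw [hXdec]
    have h1 := hX1nn u v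
    have h2 : 0 ≤ ε ^ (γ / 2) * (supOm L u + Real.sqrt ε * supOm L v) :=
      mul_nonneg hege.le (add_nonneg hSUnn (mul_nonneg hsE.le hSVnn))
    have h3 := Real.sqrt_nonneg (sqB (fun y => y * pdy u L y)
        + ε * sqB (fun y => y * pdx u L y) + ε * sqB (fun y => pdx u L y))
    linarith
  have hYnn : 0 ≤ normX L ε γ ub vb := by
    rw [hYdec]
    have h1 := hX1nn ub vb
    have h2 : 0 ≤ ε ^ (γ / 2) * (supOm L ub + Real.sqrt ε * supOm L vb) :=
      mul_nonneg hege.le (add_nonneg hSUbnn (mul_nonneg hsE.le hSVbnn))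
    have h3 := Real.sqrt_nonneg (sqB (fun y => y * pdy ub L y)
        + ε * sqB (fun y => y * pdx ub L y) + ε * sqB (fun y => pdx ub L y))
    linarith
  -- generic component bounds
  have hcomp : ∀ w z : ℝ → ℝ → ℝ, ∀ hbw : ∃ M, ∀ x y, |w x y| ≤ M ∧ |z x y| ≤ M,
      Real.sqrt (sq2 L (fun x y => y * pdy w x y)) ≤ normX L ε γ w z
      ∧ Real.sqrt ε * Real.sqrt (sq2 L (fun x y => y * pdx w x y)) ≤ normX L ε γ w z
      ∧ Real.sqrt (sq2 L (pdy z)) ≤ normX L ε γ w z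
      ∧ Real.sqrt (sq2 L (fun x y => y * pdy (pdy w) x y)) ≤ normX L ε γ w z
      ∧ Real.sqrt ε * Real.sqrt (sq2 L (fun x y => y * pdx (pdy w) x y)) ≤ normX L ε γ w z
      ∧ ε * Real.sqrt (sq2 L (fun x y => y * pdx (pdx w) x y)) ≤ normX L ε γ w z
      ∧ Real.sqrt (sqB (fun y => y * pdy w L y)) ≤ normX L ε γ w z
      ∧ Real.sqrt ε * Real.sqrt (sqB (fun y => y * pdx w L y)) ≤ normX L ε γ w z
      ∧ ε ^ (γ / 2) * supOm L w ≤ normX L ε γ w z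
      ∧ ε ^ (γ / 2) * (Real.sqrt ε * supOm L z) ≤ normX L ε γ w z := by
    intro w z hbw
    obtain ⟨M, hM⟩ := hbw
    obtain ⟨hSwnn, _⟩ := supOm_spec hL (F := w) (fun x y => (hM x y).1)
    obtain ⟨hSznn, _⟩ := supOm_spec hL (F := z) (fun x y => (hM x y).2)
    have hdec : normX L ε γ w z = normX1 L ε w z
        + ε ^ (γ / 2) * (supOm L w + Real.sqrt ε * supOm L z)
        + Real.sqrt (sqB (fun y => y * pdy w L y) + ε * sqB (fun y => y * pdx w L y)
            + ε * sqB (fun y => pdx w L y)) := rfl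
    have hsupnn : 0 ≤ ε ^ (γ / 2) * (supOm L w + Real.sqrt ε * supOm L z) :=
      mul_nonneg hege.le (add_nonneg hSwnn (mul_nonneg hsE.le hSznn))
    have hx1 := hX1dec w z
    have s1 := Real.sqrt_nonneg (sq2 L (fun x y => y * pdy w x y))
    have s2 := Real.sqrt_nonneg (ε * sq2 L (fun x y => y * pdx w x y))
    have s3 := Real.sqrt_nonneg (sq2 L (pdy z) + ε * sq2 L (pdx z))
    have s4 := Real.sqrt_nonneg (sq2 L (fun x y => y * pdy (pdy w) x y)
        + ε * sq2 L (fun x y => y * pdx (pdy w) x y)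
        + ε ^ 2 * sq2 L (fun x y => y * pdx (pdx w) x y))
    have sB := Real.sqrt_nonneg (sqB (fun y => y * pdy w L y)
        + ε * sqB (fun y => y * pdx w L y) + ε * sqB (fun y => pdx w L y))
    have e1 : (0:ℝ) ≤ ε * sq2 L (pdx z) := mul_nonneg hε.le (hsq2nn _)
    have e2 : (0:ℝ) ≤ ε * sq2 L (fun x y => y * pdx (pdy w) x y) := mul_nonneg hε.le (hsq2nn _)
    have e3 : (0:ℝ) ≤ ε ^ 2 * sq2 L (fun x y => y * pdx (pdx w) x y) :=
      mul_nonneg (sq_nonneg ε) (hsq2nn _)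
    have e4 : (0:ℝ) ≤ sq2 L (fun x y => y * pdy (pdy w) x y) := hsq2nn _
    have e5 : (0:ℝ) ≤ ε * sqB (fun y => y * pdx w L y) := mul_nonneg hε.le (hsqBnn _)
    have e6 : (0:ℝ) ≤ ε * sqB (fun y => pdx w L y) := mul_nonneg hε.le (hsqBnn _)
    have e7 : (0:ℝ) ≤ sqB (fun y => y * pdy w L y) := hsqBnn _
    refine ⟨?_, ?_, ?_, ?_, ?_, ?_, ?_, ?_, ?_, ?_⟩
    · rw [hdec, hx1]; linarith
    · rw [hdec, hx1, ← Real.sqrt_mul hε.le]; linarith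
    · have h1 : Real.sqrt (sq2 L (pdy z)) ≤ Real.sqrt (sq2 L (pdy z) + ε * sq2 L (pdx z)) :=
        Real.sqrt_le_sqrt (by linarith)
      rw [hdec, hx1]; linarith
    · have h1 : Real.sqrt (sq2 L (fun x y => y * pdy (pdy w) x y))
          ≤ Real.sqrt (sq2 L (fun x y => y * pdy (pdy w) x y)
            + ε * sq2 L (fun x y => y * pdx (pdy w) x y)
            + ε ^ 2 * sq2 L (fun x y => y * pdx (pdx w) x y)) :=
        Real.sqrt_le_sqrt (by linarith)
      rw [hdec, hx1]; linarith
    · have h1 : Real.sqrt ε * Real.sqrt (sq2 L (fun x y => y * pdx (pdy w) x y))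
          ≤ Real.sqrt (sq2 L (fun x y => y * pdy (pdy w) x y)
            + ε * sq2 L (fun x y => y * pdx (pdy w) x y)
            + ε ^ 2 * sq2 L (fun x y => y * pdx (pdx w) x y)) := by
        rw [← Real.sqrt_mul hε.le]
        exact Real.sqrt_le_sqrt (by linarith)
      rw [hdec, hx1]; linarith
    · have h1 : ε * Real.sqrt (sq2 L (fun x y => y * pdx (pdx w) x y))
          ≤ Real.sqrt (sq2 L (fun x y => y * pdy (pdy w) x y)
            + ε * sq2 L (fun x y => y * pdx (pdy w) x y)
            + ε ^ 2 * sq2 L (fun x y => y * pdx (pdx w) x y)) := by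
        have he : ε * Real.sqrt (sq2 L (fun x y => y * pdx (pdx w) x y))
            = Real.sqrt (ε ^ 2 * sq2 L (fun x y => y * pdx (pdx w) x y)) := by
          rw [Real.sqrt_mul (sq_nonneg ε), Real.sqrt_sq hε.le]
        rw [he]
        exact Real.sqrt_le_sqrt (by linarith)
      rw [hdec, hx1]; linarith
    · have h1 : Real.sqrt (sqB (fun y => y * pdy w L y))
          ≤ Real.sqrt (sqB (fun y => y * pdy w L y) + ε * sqB (fun y => y * pdx w L y)
            + ε * sqB (fun y => pdx w L y)) :=
        Real.sqrt_le_sqrt (by linarith)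
      have h2 := hX1nn w z
      rw [hdec]; linarith
    · have h1 : Real.sqrt ε * Real.sqrt (sqB (fun y => y * pdx w L y))
          ≤ Real.sqrt (sqB (fun y => y * pdy w L y) + ε * sqB (fun y => y * pdx w L y)
            + ε * sqB (fun y => pdx w L y)) := by
        rw [← Real.sqrt_mul hε.le]
        exact Real.sqrt_le_sqrt (by linarith)
      have h2 := hX1nn w z
      rw [hdec]; linarith
    · have h2 := hX1nn w z
      have h4 : 0 ≤ Real.sqrt ε * supOm L z := mul_nonneg hsE.le hSznn
      have h3 : ε ^ (γ / 2) * supOm L w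
          ≤ ε ^ (γ / 2) * (supOm L w + Real.sqrt ε * supOm L z) := by
        refine mul_le_mul_of_nonneg_left ?_ hege.le
        linarith
      rw [hdec]; linarith [sB]
    · have h2 := hX1nn w z
      have h3 : ε ^ (γ / 2) * (Real.sqrt ε * supOm L z)
          ≤ ε ^ (γ / 2) * (supOm L w + Real.sqrt ε * supOm L z) := by
        refine mul_le_mul_of_nonneg_left ?_ hege.le
        linarith
      rw [hdec]; linarith [sB]
  obtain ⟨ha1, ha2, ha3, ha4a, ha4b, ha4c, habd1, habd2, hasup, hasupv⟩ :=
    hcomp u v ⟨Mu, hMu⟩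
  obtain ⟨hb1, hb2, hb3, hb4a, hb4b, hb4c, hbbd1, hbbd2, hbsup, hbsupv⟩ :=
    hcomp ub vb ⟨Mb, hMb⟩
  -- Poincaré / trace for (u,v)
  have hbc0u : ∀ y, u 0 y = 0 := fun y => (hu.bc_x0 y).1
  obtain ⟨hyu_mem, hyu_int, hyuL_mem, hyuL_int⟩ :=
    poincare (ρ := fun t : ℝ => t) hL hu.smooth_u hbc0u continuous_id hu.mem_wux
  obtain ⟨hu_mem', hu_int', -, -⟩ :=
    poincare (ρ := fun _ : ℝ => (1:ℝ)) hL hu.smooth_u hbc0u continuous_const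
      (by simpa using hu.mem_ux)
  have hu_mem : MemLp (fun p : ℝ × ℝ => u p.1 p.2) 2 (muOm L) := by simpa using hu_mem'
  have hu_int : ∫ p, (u p.1 p.2) ^ 2 ∂(muOm L)
      ≤ L ^ 2 * ∫ p, (pdx u p.1 p.2) ^ 2 ∂(muOm L) := by simpa using hu_int'
  -- pdx u = - pdy v
  have hpdx_sq : (fun p : ℝ × ℝ => (pdx u p.1 p.2) ^ 2) = fun p => (pdy v p.1 p.2) ^ 2 := by
    funext p
    have h := hu.divfree p.1 p.2
    have h2 : pdx u p.1 p.2 = -pdy v p.1 p.2 := by linarith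
    rw [h2]
    ring
  -- derived bounds
  have hu2 : Real.sqrt (sq2 L (fun x y => u x y)) ≤ normX L ε γ u v := by
    have h1 : sq2 L (fun x y => u x y) ≤ L ^ 2 * sq2 L (pdy v) := by
      rw [sq2_eq L (fun x y => u x y), sq2_eq L (pdy v)]
      rw [hpdx_sq] at hu_int
      exact hu_int
    have h2 := Real.sqrt_le_sqrt h1
    rw [Real.sqrt_mul (sq_nonneg L), Real.sqrt_sq hL.le] at h2
    have h3 : L * Real.sqrt (sq2 L (pdy v)) ≤ 1 * Real.sqrt (sq2 L (pdy v)) :=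
      mul_le_mul_of_nonneg_right hL1 (Real.sqrt_nonneg _)
    rw [one_mul] at h3
    exact h2.trans (h3.trans ha3)
  have hyu2 : Real.sqrt ε * Real.sqrt (sq2 L (fun x y => y * u x y)) ≤ normX L ε γ u v := by
    have h1 : sq2 L (fun x y => y * u x y) ≤ L ^ 2 * sq2 L (fun x y => y * pdx u x y) := by
      rw [sq2_eq L (fun x y => y * u x y), sq2_eq L (fun x y => y * pdx u x y)]
      exact hyu_int
    have h2 := Real.sqrt_le_sqrt h1
    rw [Real.sqrt_mul (sq_nonneg L), Real.sqrt_sq hL.le] at h2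
    have h3 : L * Real.sqrt (sq2 L (fun x y => y * pdx u x y))
        ≤ 1 * Real.sqrt (sq2 L (fun x y => y * pdx u x y)) :=
      mul_le_mul_of_nonneg_right hL1 (Real.sqrt_nonneg _)
    rw [one_mul] at h3
    calc Real.sqrt ε * Real.sqrt (sq2 L (fun x y => y * u x y))
        ≤ Real.sqrt ε * Real.sqrt (sq2 L (fun x y => y * pdx u x y)) :=
          mul_le_mul_of_nonneg_left (h2.trans h3) hsE.le
      _ ≤ normX L ε γ u v := ha2
  have hyuL2 : Real.sqrt ε * Real.sqrt (sqB (fun y => y * u L y)) ≤ normX L ε γ u v := by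
    have h1 : sqB (fun y => y * u L y) ≤ L * sq2 L (fun x y => y * pdx u x y) := by
      rw [sq2_eq L (fun x y => y * pdx u x y)]
      exact hyuL_int
    have h2 := Real.sqrt_le_sqrt h1
    rw [Real.sqrt_mul hL.le] at h2
    have hsL1 : Real.sqrt L ≤ 1 := by
      rw [show (1:ℝ) = Real.sqrt 1 by simp]
      exact Real.sqrt_le_sqrt hL1
    have h3 : Real.sqrt L * Real.sqrt (sq2 L (fun x y => y * pdx u x y))
        ≤ 1 * Real.sqrt (sq2 L (fun x y => y * pdx u x y)) :=
      mul_le_mul_of_nonneg_right hsL1 (Real.sqrt_nonneg _)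
    rw [one_mul] at h3
    calc Real.sqrt ε * Real.sqrt (sqB (fun y => y * u L y))
        ≤ Real.sqrt ε * Real.sqrt (sq2 L (fun x y => y * pdx u x y)) :=
          mul_le_mul_of_nonneg_left (h2.trans h3) hsE.le
      _ ≤ normX L ε γ u v := ha2
  -- ε-power decomposition
  have hc1eq : ε ^ ((1:ℝ)/2 + γ) = ε ^ (γ/2) * (ε ^ (γ/2) * Real.sqrt ε) := by
    have he : (1:ℝ)/2 + γ = γ/2 + (γ/2 + (1:ℝ)/2) := by ring
    rw [he, Real.rpow_add hε, Real.rpow_add hε, Real.sqrt_eq_rpow]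
  have hc1pos : (0:ℝ) < ε ^ ((1:ℝ)/2 + γ) := Real.rpow_pos_of_pos hε _
  -- continuity of basic objects
  have hC_ub : Continuous fun p : ℝ × ℝ => ub p.1 p.2 := hub.smooth_u.continuous
  have hC_vb : Continuous fun p : ℝ × ℝ => vb p.1 p.2 := hub.smooth_v.continuous
  have hae := ae_mem_Omeg L
  have hwub : ∀ᵐ p ∂(muOm L), |(1 - p.1) * ub p.1 p.2| ≤ supOm L ub := by
    filter_upwards [hae] with p hp
    obtain ⟨hp1, hp2⟩ := hp
    have hx : p.1 ∈ Icc 0 L := Ioo_subset_Icc_self hp1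
    have h1 : |1 - p.1| ≤ 1 := by
      rw [abs_of_nonneg (by linarith [hx.2] : (0:ℝ) ≤ 1 - p.1)]
      linarith [hx.1]
    rw [abs_mul]
    calc |1 - p.1| * |ub p.1 p.2| ≤ 1 * supOm L ub :=
        mul_le_mul h1 (hSUb p.1 hx p.2 (mem_Ici.2 (le_of_lt hp2))) (abs_nonneg _) zero_le_one
      _ = supOm L ub := one_mul _
  have hwvb : ∀ᵐ p ∂(muOm L), |(1 - p.1) * vb p.1 p.2| ≤ supOm L vb := by
    filter_upwards [hae] with p hp
    obtain ⟨hp1, hp2⟩ := hp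
    have hx : p.1 ∈ Icc 0 L := Ioo_subset_Icc_self hp1
    have h1 : |1 - p.1| ≤ 1 := by
      rw [abs_of_nonneg (by linarith [hx.2] : (0:ℝ) ≤ 1 - p.1)]
      linarith [hx.1]
    rw [abs_mul]
    calc |1 - p.1| * |vb p.1 p.2| ≤ 1 * supOm L vb :=
        mul_le_mul h1 (hSVb p.1 hx p.2 (mem_Ici.2 (le_of_lt hp2))) (abs_nonneg _) zero_le_one
      _ = supOm L vb := one_mul _
  have hwub2 : ∀ᵐ p ∂(muOm L), |2 * ((1 - p.1) * ub p.1 p.2)| ≤ 2 * supOm L ub := by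
    filter_upwards [hwub] with p hp
    rw [abs_mul, abs_two]
    linarith
  have hwvb2 : ∀ᵐ p ∂(muOm L), |2 * ((1 - p.1) * vb p.1 p.2)| ≤ 2 * supOm L vb := by
    filter_upwards [hwvb] with p hp
    rw [abs_mul, abs_two]
    linarith
  have hmeas_wub : AEStronglyMeasurable (fun p : ℝ × ℝ => (1 - p.1) * ub p.1 p.2) (muOm L) :=
    ((continuous_const.sub continuous_fst).mul hC_ub).aestronglyMeasurable
  have hmeas_wvb : AEStronglyMeasurable (fun p : ℝ × ℝ => (1 - p.1) * vb p.1 p.2) (muOm L) :=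
    ((continuous_const.sub continuous_fst).mul hC_vb).aestronglyMeasurable
  have hmeas_wub2 : AEStronglyMeasurable
      (fun p : ℝ × ℝ => 2 * ((1 - p.1) * ub p.1 p.2)) (muOm L) :=
    aestronglyMeasurable_const.mul hmeas_wub
  have hmeas_wvb2 : AEStronglyMeasurable
      (fun p : ℝ × ℝ => 2 * ((1 - p.1) * vb p.1 p.2)) (muOm L) :=
    aestronglyMeasurable_const.mul hmeas_wvb
  -- ==================== Part I1 ====================
  have hT1 := tri_spec (L := L) (c := ε ^ ((1:ℝ)/2 + γ)) hc1pos.le hSUbnn hmeas_wub hwub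
    (g := fun x y => y * pdx (pdy ub) x y) (h := fun x y => y * pdy u x y)
    hub.mem_wuxy hu.mem_wuy
  have hT2 := tri_spec (L := L) (c := ε ^ ((1:ℝ)/2 + γ)) hc1pos.le
    (by linarith : (0:ℝ) ≤ 2 * supOm L ub) hmeas_wub2 hwub2
    (g := fun x y => y * pdx (pdy ub) x y) (h := fun x y => u x y)
    hub.mem_wuxy hu_mem
  have hT3 := tri_spec (L := L) (c := ε ^ ((1:ℝ)/2 + γ)) hc1pos.le hSVbnn hmeas_wvb hwvb
    (g := fun x y => y * pdy (pdy ub) x y) (h := fun x y => y * pdy u x y)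
    hub.mem_wuyy hu.mem_wuy
  have hT4 := tri_spec (L := L) (c := ε ^ ((1:ℝ)/2 + γ)) hc1pos.le
    (by linarith : (0:ℝ) ≤ 2 * supOm L vb) hmeas_wvb2 hwvb2
    (g := fun x y => y * pdy (pdy ub) x y) (h := fun x y => u x y)
    hub.mem_wuyy hu_mem
  have hpt1 : (fun p : ℝ × ℝ => pdy (Nu ε γ ub vb) p.1 p.2 * pdy (wmul u) p.1 p.2)
      = fun p : ℝ × ℝ =>
        ε ^ ((1:ℝ)/2 + γ) * ((1 - p.1) * ub p.1 p.2)
            * ((p.2 * pdx (pdy ub) p.1 p.2) * (p.2 * pdy u p.1 p.2))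
        + (ε ^ ((1:ℝ)/2 + γ) * (2 * ((1 - p.1) * ub p.1 p.2))
            * ((p.2 * pdx (pdy ub) p.1 p.2) * (u p.1 p.2))
        + (ε ^ ((1:ℝ)/2 + γ) * ((1 - p.1) * vb p.1 p.2)
            * ((p.2 * pdy (pdy ub) p.1 p.2) * (p.2 * pdy u p.1 p.2))
        + ε ^ ((1:ℝ)/2 + γ) * (2 * ((1 - p.1) * vb p.1 p.2))
            * ((p.2 * pdy (pdy ub) p.1 p.2) * (u p.1 p.2)))) := by
    funext p
    rw [pdy_Nu_eq hub.smooth_u hub.smooth_v hub.divfree p.1 p.2,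
      pdy_wmul hu.smooth_u p.1 p.2]
    ring
  -- beta-normalized restatements
  have hIT1 : Integrable (fun p : ℝ × ℝ => ε ^ ((1:ℝ)/2 + γ) * ((1 - p.1) * ub p.1 p.2)
      * ((p.2 * pdx (pdy ub) p.1 p.2) * (p.2 * pdy u p.1 p.2))) (muOm L) := hT1.1
  have hIT2 : Integrable (fun p : ℝ × ℝ => ε ^ ((1:ℝ)/2 + γ) * (2 * ((1 - p.1) * ub p.1 p.2))
      * ((p.2 * pdx (pdy ub) p.1 p.2) * (u p.1 p.2))) (muOm L) := hT2.1
  have hIT3 : Integrable (fun p : ℝ × ℝ => ε ^ ((1:ℝ)/2 + γ) * ((1 - p.1) * vb p.1 p.2)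
      * ((p.2 * pdy (pdy ub) p.1 p.2) * (p.2 * pdy u p.1 p.2))) (muOm L) := hT3.1
  have hIT4 : Integrable (fun p : ℝ × ℝ => ε ^ ((1:ℝ)/2 + γ) * (2 * ((1 - p.1) * vb p.1 p.2))
      * ((p.2 * pdy (pdy ub) p.1 p.2) * (u p.1 p.2))) (muOm L) := hT4.1
  have hIT234 : Integrable (fun p : ℝ × ℝ =>
      ε ^ ((1:ℝ)/2 + γ) * (2 * ((1 - p.1) * ub p.1 p.2))
        * ((p.2 * pdx (pdy ub) p.1 p.2) * (u p.1 p.2))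
      + (ε ^ ((1:ℝ)/2 + γ) * ((1 - p.1) * vb p.1 p.2)
          * ((p.2 * pdy (pdy ub) p.1 p.2) * (p.2 * pdy u p.1 p.2))
        + ε ^ ((1:ℝ)/2 + γ) * (2 * ((1 - p.1) * vb p.1 p.2))
          * ((p.2 * pdy (pdy ub) p.1 p.2) * (u p.1 p.2)))) (muOm L) :=
    hIT2.add (hIT3.add hIT4)
  have hIT34 : Integrable (fun p : ℝ × ℝ =>
      ε ^ ((1:ℝ)/2 + γ) * ((1 - p.1) * vb p.1 p.2)
          * ((p.2 * pdy (pdy ub) p.1 p.2) * (p.2 * pdy u p.1 p.2))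
        + ε ^ ((1:ℝ)/2 + γ) * (2 * ((1 - p.1) * vb p.1 p.2))
          * ((p.2 * pdy (pdy ub) p.1 p.2) * (u p.1 p.2))) (muOm L) :=
    hIT3.add hIT4
  have hab1 : |∫ p, ε ^ ((1:ℝ)/2 + γ) * ((1 - p.1) * ub p.1 p.2)
      * ((p.2 * pdx (pdy ub) p.1 p.2) * (p.2 * pdy u p.1 p.2)) ∂(muOm L)|
      ≤ ε ^ ((1:ℝ)/2 + γ) * supOm L ub
        * (Real.sqrt (sq2 L (fun x y => y * pdx (pdy ub) x y))
          * Real.sqrt (sq2 L (fun x y => y * pdy u x y))) := hT1.2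
  have hab2 : |∫ p, ε ^ ((1:ℝ)/2 + γ) * (2 * ((1 - p.1) * ub p.1 p.2))
      * ((p.2 * pdx (pdy ub) p.1 p.2) * (u p.1 p.2)) ∂(muOm L)|
      ≤ ε ^ ((1:ℝ)/2 + γ) * (2 * supOm L ub)
        * (Real.sqrt (sq2 L (fun x y => y * pdx (pdy ub) x y))
          * Real.sqrt (sq2 L (fun x y => u x y))) := hT2.2
  have hab3 : |∫ p, ε ^ ((1:ℝ)/2 + γ) * ((1 - p.1) * vb p.1 p.2)
      * ((p.2 * pdy (pdy ub) p.1 p.2) * (p.2 * pdy u p.1 p.2)) ∂(muOm L)|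
      ≤ ε ^ ((1:ℝ)/2 + γ) * supOm L vb
        * (Real.sqrt (sq2 L (fun x y => y * pdy (pdy ub) x y))
          * Real.sqrt (sq2 L (fun x y => y * pdy u x y))) := hT3.2
  have hab4 : |∫ p, ε ^ ((1:ℝ)/2 + γ) * (2 * ((1 - p.1) * vb p.1 p.2))
      * ((p.2 * pdy (pdy ub) p.1 p.2) * (u p.1 p.2)) ∂(muOm L)|
      ≤ ε ^ ((1:ℝ)/2 + γ) * (2 * supOm L vb)
        * (Real.sqrt (sq2 L (fun x y => y * pdy (pdy ub) x y))
          * Real.sqrt (sq2 L (fun x y => u x y))) := hT4.2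
  have hI1bound : |intO L (fun x y => pdy (Nu ε γ ub vb) x y * pdy (wmul u) x y)|
      ≤ 6 * (ε ^ (γ/2) * (normX L ε γ ub vb * (normX L ε γ ub vb * normX L ε γ u v))) := by
    have hB1 : ε ^ ((1:ℝ)/2 + γ) * supOm L ub
          * (Real.sqrt (sq2 L (fun x y => y * pdx (pdy ub) x y))
            * Real.sqrt (sq2 L (fun x y => y * pdy u x y)))
        ≤ ε ^ (γ/2) * (normX L ε γ ub vb * (normX L ε γ ub vb * normX L ε γ u v)) := by
      have heq : ε ^ ((1:ℝ)/2 + γ) * supOm L ub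
          * (Real.sqrt (sq2 L (fun x y => y * pdx (pdy ub) x y))
            * Real.sqrt (sq2 L (fun x y => y * pdy u x y)))
          = ε ^ (γ/2) * ((ε ^ (γ/2) * supOm L ub)
            * ((Real.sqrt ε * Real.sqrt (sq2 L (fun x y => y * pdx (pdy ub) x y)))
              * Real.sqrt (sq2 L (fun x y => y * pdy u x y)))) := by
        rw [hc1eq]; ring
      rw [heq]
      refine mul_le_mul_of_nonneg_left ?_ hege.le
      exact mul3_le (mul_nonneg hege.le hSUbnn)
        (mul_nonneg hsE.le (Real.sqrt_nonneg _)) (Real.sqrt_nonneg _) hbsup hb4b ha1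
    have hB2 : ε ^ ((1:ℝ)/2 + γ) * (2 * supOm L ub)
          * (Real.sqrt (sq2 L (fun x y => y * pdx (pdy ub) x y))
            * Real.sqrt (sq2 L (fun x y => u x y)))
        ≤ 2 * (ε ^ (γ/2) * (normX L ε γ ub vb * (normX L ε γ ub vb * normX L ε γ u v))) := by
      have heq : ε ^ ((1:ℝ)/2 + γ) * (2 * supOm L ub)
          * (Real.sqrt (sq2 L (fun x y => y * pdx (pdy ub) x y))
            * Real.sqrt (sq2 L (fun x y => u x y)))
          = 2 * (ε ^ (γ/2) * ((ε ^ (γ/2) * supOm L ub)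
            * ((Real.sqrt ε * Real.sqrt (sq2 L (fun x y => y * pdx (pdy ub) x y)))
              * Real.sqrt (sq2 L (fun x y => u x y))))) := by
        rw [hc1eq]; ring
      rw [heq]
      refine mul_le_mul_of_nonneg_left (mul_le_mul_of_nonneg_left ?_ hege.le) (by norm_num)
      exact mul3_le (mul_nonneg hege.le hSUbnn)
        (mul_nonneg hsE.le (Real.sqrt_nonneg _)) (Real.sqrt_nonneg _) hbsup hb4b hu2
    have hB3 : ε ^ ((1:ℝ)/2 + γ) * supOm L vb
          * (Real.sqrt (sq2 L (fun x y => y * pdy (pdy ub) x y))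
            * Real.sqrt (sq2 L (fun x y => y * pdy u x y)))
        ≤ ε ^ (γ/2) * (normX L ε γ ub vb * (normX L ε γ ub vb * normX L ε γ u v)) := by
      have heq : ε ^ ((1:ℝ)/2 + γ) * supOm L vb
          * (Real.sqrt (sq2 L (fun x y => y * pdy (pdy ub) x y))
            * Real.sqrt (sq2 L (fun x y => y * pdy u x y)))
          = ε ^ (γ/2) * ((ε ^ (γ/2) * (Real.sqrt ε * supOm L vb))
            * (Real.sqrt (sq2 L (fun x y => y * pdy (pdy ub) x y))
              * Real.sqrt (sq2 L (fun x y => y * pdy u x y)))) := by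
        rw [hc1eq]; ring
      rw [heq]
      refine mul_le_mul_of_nonneg_left ?_ hege.le
      exact mul3_le (mul_nonneg hege.le (mul_nonneg hsE.le hSVbnn))
        (Real.sqrt_nonneg _) (Real.sqrt_nonneg _) hbsupv hb4a ha1
    have hB4 : ε ^ ((1:ℝ)/2 + γ) * (2 * supOm L vb)
          * (Real.sqrt (sq2 L (fun x y => y * pdy (pdy ub) x y))
            * Real.sqrt (sq2 L (fun x y => u x y)))
        ≤ 2 * (ε ^ (γ/2) * (normX L ε γ ub vb * (normX L ε γ ub vb * normX L ε γ u v))) := by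
      have heq : ε ^ ((1:ℝ)/2 + γ) * (2 * supOm L vb)
          * (Real.sqrt (sq2 L (fun x y => y * pdy (pdy ub) x y))
            * Real.sqrt (sq2 L (fun x y => u x y)))
          = 2 * (ε ^ (γ/2) * ((ε ^ (γ/2) * (Real.sqrt ε * supOm L vb))
            * (Real.sqrt (sq2 L (fun x y => y * pdy (pdy ub) x y))
              * Real.sqrt (sq2 L (fun x y => u x y))))) := by
        rw [hc1eq]; ring
      rw [heq]
      refine mul_le_mul_of_nonneg_left (mul_le_mul_of_nonneg_left ?_ hege.le) (by norm_num)
      exact mul3_le (mul_nonneg hege.le (mul_nonneg hsE.le hSVbnn))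
        (Real.sqrt_nonneg _) (Real.sqrt_nonneg _) hbsupv hb4a hu2
    have c1 := hab1.trans hB1
    have c2 := hab2.trans hB2
    have c3 := hab3.trans hB3
    have c4 := hab4.trans hB4
    rw [intO_eq, hpt1, integral_add hIT1 hIT234, integral_add hIT2 hIT34,
      integral_add hIT3 hIT4]
    refine le_trans (abs_add_le _ _) ?_
    refine le_trans (add_le_add_right (abs_add_le _ _) _) ?_
    refine le_trans (add_le_add_right (add_le_add_right (abs_add_le _ _) _) _) ?_
    linarith
  -- ==================== Part I2 ====================
  set Vf : ℝ → ℝ → ℝ := fun a b => pdy ub a b * vb a b + ub a b * pdx ub a b with hVf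
  set ψf : ℝ → ℝ → ℝ := fun a b => (pdx u a b * (1 - a) - u a b) * b ^ 2 with hψf
  have hVsm : ContDiff ℝ (⊤ : ℕ∞) (uncurry Vf) :=
    ((contDiff_pdy hub.smooth_u).mul hub.smooth_v).add
      (hub.smooth_u.mul (contDiff_pdx hub.smooth_u))
  have hψsm : ContDiff ℝ (⊤ : ℕ∞) (uncurry ψf) :=
    (((contDiff_pdx hu.smooth_u).mul (contDiff_const.sub contDiff_fst)).sub hu.smooth_u).mul
      (contDiff_snd.pow 2)
  have hV0 : ∀ y, Vf 0 y = 0 := by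
    intro y
    have h1 : ub 0 y = 0 := (hub.bc_x0 y).1
    have h2 : vb 0 y = 0 := (hub.bc_x0 y).2
    simp [hVf, h1, h2]
  have hPV : ∀ x y, pdx Vf x y = pdx (pdy ub) x y * vb x y + pdy ub x y * pdx vb x y
      + (pdx ub x y * pdx ub x y + ub x y * pdx (pdx ub) x y) := by
    intro x y
    rw [hVf]
    exact pdx_V_eq hub.smooth_u hub.smooth_v x y
  have hPψ : ∀ x y, pdx ψf x y = (pdx (pdx u) x y * (1 - x) - 2 * pdx u x y) * y ^ 2 := by
    intro x y
    rw [hψf]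
    exact pdx_psi_eq hu.smooth_u x y
  -- ae bounds for I2 interior weights
  have hub_b : ∀ᵐ p ∂(muOm L), |(-2 : ℝ) * ((1 - p.1) * ub p.1 p.2)| ≤ 2 * supOm L ub := by
    filter_upwards [hwub] with p hp
    rw [abs_mul]
    have : |(-2 : ℝ)| = 2 := by norm_num
    rw [this]
    linarith
  have hvb_b : ∀ᵐ p ∂(muOm L), |(-2 : ℝ) * ((1 - p.1) * vb p.1 p.2)| ≤ 2 * supOm L vb := by
    filter_upwards [hwvb] with p hp
    rw [abs_mul]
    have : |(-2 : ℝ)| = 2 := by norm_num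
    rw [this]
    linarith
  have hub_p : ∀ᵐ p ∂(muOm L), |ub p.1 p.2| ≤ supOm L ub := by
    filter_upwards [hae] with p hp
    obtain ⟨hp1, hp2⟩ := hp
    exact hSUb p.1 (Ioo_subset_Icc_self hp1) p.2 (mem_Ici.2 (le_of_lt hp2))
  have hvb_p : ∀ᵐ p ∂(muOm L), |vb p.1 p.2| ≤ supOm L vb := by
    filter_upwards [hae] with p hp
    obtain ⟨hp1, hp2⟩ := hp
    exact hSVb p.1 (Ioo_subset_Icc_self hp1) p.2 (mem_Ici.2 (le_of_lt hp2))
  have hub_2p : ∀ᵐ p ∂(muOm L), |2 * ub p.1 p.2| ≤ 2 * supOm L ub := by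
    filter_upwards [hub_p] with p hp
    rw [abs_mul, abs_two]
    linarith
  have hvb_2p : ∀ᵐ p ∂(muOm L), |2 * vb p.1 p.2| ≤ 2 * supOm L vb := by
    filter_upwards [hvb_p] with p hp
    rw [abs_mul, abs_two]
    linarith
  have hub_m2p : ∀ᵐ p ∂(muOm L), |(-2 : ℝ) * ub p.1 p.2| ≤ 2 * supOm L ub := by
    filter_upwards [hub_p] with p hp
    rw [abs_mul]
    have : |(-2 : ℝ)| = 2 := by norm_num
    rw [this]
    linarith
  have hvb_m2p : ∀ᵐ p ∂(muOm L), |(-2 : ℝ) * vb p.1 p.2| ≤ 2 * supOm L vb := by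
    filter_upwards [hvb_p] with p hp
    rw [abs_mul]
    have : |(-2 : ℝ)| = 2 := by norm_num
    rw [this]
    linarith
  have hc2pos : (0:ℝ) < ε ^ ((1:ℝ)/2 + γ) * ε := mul_pos hc1pos hε
  have h2SUbnn : (0:ℝ) ≤ 2 * supOm L ub := by linarith
  have h2SVbnn : (0:ℝ) ≤ 2 * supOm L vb := by linarith
  -- interior trilinear pieces
  have hT5 := tri_spec (L := L) (c := ε ^ ((1:ℝ)/2 + γ) * ε) hc2pos.le h2SUbnn
    (aestronglyMeasurable_const.mul hmeas_wub) hub_b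
    (g := fun x y => y * pdx (pdx ub) x y) (h := fun x y => y * pdx u x y)
    hub.mem_wuxx hu.mem_wux
  have hT6 := tri_spec (L := L) (c := ε ^ ((1:ℝ)/2 + γ) * ε) hc2pos.le h2SUbnn
    (aestronglyMeasurable_const.mul hC_ub.aestronglyMeasurable) hub_2p
    (g := fun x y => y * pdx (pdx ub) x y) (h := fun x y => y * u x y)
    hub.mem_wuxx hyu_mem
  have hT7 := tri_spec (L := L) (c := ε ^ ((1:ℝ)/2 + γ) * ε) hc2pos.le h2SVbnn
    (aestronglyMeasurable_const.mul hmeas_wvb) hvb_b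
    (g := fun x y => y * pdx (pdy ub) x y) (h := fun x y => y * pdx u x y)
    hub.mem_wuxy hu.mem_wux
  have hT8 := tri_spec (L := L) (c := ε ^ ((1:ℝ)/2 + γ) * ε) hc2pos.le h2SVbnn
    (aestronglyMeasurable_const.mul hC_vb.aestronglyMeasurable) hvb_2p
    (g := fun x y => y * pdx (pdy ub) x y) (h := fun x y => y * u x y)
    hub.mem_wuxy hyu_mem
  have hT9 := tri_spec (L := L) (c := ε ^ ((1:ℝ)/2 + γ) * ε) hc2pos.le hSVbnn
    hmeas_wvb hwvb
    (g := fun x y => y * pdy ub x y) (h := fun x y => y * pdx (pdx u) x y)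
    hub.mem_wuy hu.mem_wuxx
  have hT10 := tri_spec (L := L) (c := ε ^ ((1:ℝ)/2 + γ) * ε) hc2pos.le h2SVbnn
    (aestronglyMeasurable_const.mul hC_vb.aestronglyMeasurable) hvb_m2p
    (g := fun x y => y * pdy ub x y) (h := fun x y => y * pdx u x y)
    hub.mem_wuy hu.mem_wux
  have hT11 := tri_spec (L := L) (c := ε ^ ((1:ℝ)/2 + γ) * ε) hc2pos.le hSUbnn
    hmeas_wub hwub
    (g := fun x y => y * pdx ub x y) (h := fun x y => y * pdx (pdx u) x y)
    hub.mem_wux hu.mem_wuxx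
  have hT12 := tri_spec (L := L) (c := ε ^ ((1:ℝ)/2 + γ) * ε) hc2pos.le h2SUbnn
    (aestronglyMeasurable_const.mul hC_ub.aestronglyMeasurable) hub_m2p
    (g := fun x y => y * pdx ub x y) (h := fun x y => y * pdx u x y)
    hub.mem_wux hu.mem_wux
  -- boundary ae facts
  have hae2 : ∀ᵐ y ∂(volume.restrict (Ioi (0:ℝ))), y ∈ Ioi (0:ℝ) :=
    ae_restrict_mem measurableSet_Ioi
  have hLIcc : L ∈ Icc (0:ℝ) L := ⟨hL.le, le_rfl⟩
  have hbd_vb : ∀ᵐ y ∂(volume.restrict (Ioi (0:ℝ))), |(1 - L) * vb L y| ≤ supOm L vb := by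
    filter_upwards [hae2] with y hy
    rw [abs_mul]
    have h1 : |1 - L| ≤ 1 := by
      rw [abs_of_nonneg (by linarith : (0:ℝ) ≤ 1 - L)]
      linarith
    calc |1 - L| * |vb L y| ≤ 1 * supOm L vb :=
        mul_le_mul h1 (hSVb L hLIcc y (mem_Ici.2 (le_of_lt hy))) (abs_nonneg _) zero_le_one
      _ = supOm L vb := one_mul _
  have hbd_ub : ∀ᵐ y ∂(volume.restrict (Ioi (0:ℝ))), |(1 - L) * ub L y| ≤ supOm L ub := by
    filter_upwards [hae2] with y hy
    rw [abs_mul]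
    have h1 : |1 - L| ≤ 1 := by
      rw [abs_of_nonneg (by linarith : (0:ℝ) ≤ 1 - L)]
      linarith
    calc |1 - L| * |ub L y| ≤ 1 * supOm L ub :=
        mul_le_mul h1 (hSUb L hLIcc y (mem_Ici.2 (le_of_lt hy))) (abs_nonneg _) zero_le_one
      _ = supOm L ub := one_mul _
  have hbd_vbm : ∀ᵐ y ∂(volume.restrict (Ioi (0:ℝ))), |-(vb L y)| ≤ supOm L vb := by
    filter_upwards [hae2] with y hy
    rw [abs_neg]
    exact hSVb L hLIcc y (mem_Ici.2 (le_of_lt hy))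
  have hbd_ubm : ∀ᵐ y ∂(volume.restrict (Ioi (0:ℝ))), |-(ub L y)| ≤ supOm L ub := by
    filter_upwards [hae2] with y hy
    rw [abs_neg]
    exact hSUb L hLIcc y (mem_Ici.2 (le_of_lt hy))
  have hC_vbL : Continuous (fun y => vb L y) :=
    hub.smooth_v.continuous.comp (continuous_const.prodMk continuous_id)
  have hC_ubL : Continuous (fun y => ub L y) :=
    hub.smooth_u.continuous.comp (continuous_const.prodMk continuous_id)
  -- boundary trilinear pieces
  have hS1 := tri_specB (c := ε ^ ((1:ℝ)/2 + γ) * ε) hc2pos.le hSVbnn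
    ((continuous_const.mul hC_vbL).aestronglyMeasurable) hbd_vb
    (g := fun y => y * pdy ub L y) (h := fun y => y * pdx u L y)
    hub.memB_wuy hu.memB_wux
  have hS2 := tri_specB (c := ε ^ ((1:ℝ)/2 + γ) * ε) hc2pos.le hSVbnn
    ((hC_vbL.neg).aestronglyMeasurable) hbd_vbm
    (g := fun y => y * pdy ub L y) (h := fun y => y * u L y)
    hub.memB_wuy hyuL_mem
  have hS3 := tri_specB (c := ε ^ ((1:ℝ)/2 + γ) * ε) hc2pos.le hSUbnn
    ((continuous_const.mul hC_ubL).aestronglyMeasurable) hbd_ub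
    (g := fun y => y * pdx ub L y) (h := fun y => y * pdx u L y)
    hub.memB_wux hu.memB_wux
  have hS4 := tri_specB (c := ε ^ ((1:ℝ)/2 + γ) * ε) hc2pos.le hSUbnn
    ((hC_ubL.neg).aestronglyMeasurable) hbd_ubm
    (g := fun y => y * pdx ub L y) (h := fun y => y * u L y)
    hub.memB_wux hyuL_mem
  -- ε-power identities for I2
  have hc2eqA : ε ^ ((1:ℝ)/2 + γ) * ε
      = ε ^ (γ/2) * ε ^ (γ/2) * Real.sqrt ε * ε := by
    rw [hc1eq]; ring
  have h32 : ε ^ ((1:ℝ)/2 + γ) * ε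
      = ε ^ (γ/2) * ε ^ (γ/2) * (Real.sqrt ε * Real.sqrt ε * Real.sqrt ε) := by
    have h1 : Real.sqrt ε * Real.sqrt ε * Real.sqrt ε = ε * Real.sqrt ε := by
      rw [Real.mul_self_sqrt hε.le]
    rw [h1, hc1eq]; ring
  -- abbreviation for the target quantity
  set K : ℝ := ε ^ (γ/2) * (normX L ε γ ub vb * (normX L ε γ ub vb * normX L ε γ u v)) with hK
  have hKnn : 0 ≤ K := mul_nonneg hege.le (mul_nonneg hYnn (mul_nonneg hYnn hXnn))
  -- interior I2 bounds
  have hB5 : ε ^ ((1:ℝ)/2 + γ) * ε * (2 * supOm L ub)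
      * (Real.sqrt (sq2 L (fun x y => y * pdx (pdx ub) x y))
        * Real.sqrt (sq2 L (fun x y => y * pdx u x y))) ≤ 2 * K := by
    have heq : ε ^ ((1:ℝ)/2 + γ) * ε * (2 * supOm L ub)
        * (Real.sqrt (sq2 L (fun x y => y * pdx (pdx ub) x y))
          * Real.sqrt (sq2 L (fun x y => y * pdx u x y)))
        = 2 * (ε ^ (γ/2) * ((ε ^ (γ/2) * supOm L ub)
          * ((ε * Real.sqrt (sq2 L (fun x y => y * pdx (pdx ub) x y)))
            * (Real.sqrt ε * Real.sqrt (sq2 L (fun x y => y * pdx u x y)))))) := by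
      rw [hc2eqA]; ring
    rw [heq, hK]
    refine mul_le_mul_of_nonneg_left (mul_le_mul_of_nonneg_left ?_ hege.le) (by norm_num)
    exact mul3_le (mul_nonneg hege.le hSUbnn) (mul_nonneg hε.le (Real.sqrt_nonneg _))
      (mul_nonneg hsE.le (Real.sqrt_nonneg _)) hbsup hb4c ha2
  have hB6 : ε ^ ((1:ℝ)/2 + γ) * ε * (2 * supOm L ub)
      * (Real.sqrt (sq2 L (fun x y => y * pdx (pdx ub) x y))
        * Real.sqrt (sq2 L (fun x y => y * u x y))) ≤ 2 * K := by
    have heq : ε ^ ((1:ℝ)/2 + γ) * ε * (2 * supOm L ub)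
        * (Real.sqrt (sq2 L (fun x y => y * pdx (pdx ub) x y))
          * Real.sqrt (sq2 L (fun x y => y * u x y)))
        = 2 * (ε ^ (γ/2) * ((ε ^ (γ/2) * supOm L ub)
          * ((ε * Real.sqrt (sq2 L (fun x y => y * pdx (pdx ub) x y)))
            * (Real.sqrt ε * Real.sqrt (sq2 L (fun x y => y * u x y)))))) := by
      rw [hc2eqA]; ring
    rw [heq, hK]
    refine mul_le_mul_of_nonneg_left (mul_le_mul_of_nonneg_left ?_ hege.le) (by norm_num)
    exact mul3_le (mul_nonneg hege.le hSUbnn) (mul_nonneg hε.le (Real.sqrt_nonneg _))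
      (mul_nonneg hsE.le (Real.sqrt_nonneg _)) hbsup hb4c hyu2
  have hB7 : ε ^ ((1:ℝ)/2 + γ) * ε * (2 * supOm L vb)
      * (Real.sqrt (sq2 L (fun x y => y * pdx (pdy ub) x y))
        * Real.sqrt (sq2 L (fun x y => y * pdx u x y))) ≤ 2 * K := by
    have heq : ε ^ ((1:ℝ)/2 + γ) * ε * (2 * supOm L vb)
        * (Real.sqrt (sq2 L (fun x y => y * pdx (pdy ub) x y))
          * Real.sqrt (sq2 L (fun x y => y * pdx u x y)))
        = 2 * (ε ^ (γ/2) * ((ε ^ (γ/2) * (Real.sqrt ε * supOm L vb))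
          * ((Real.sqrt ε * Real.sqrt (sq2 L (fun x y => y * pdx (pdy ub) x y)))
            * (Real.sqrt ε * Real.sqrt (sq2 L (fun x y => y * pdx u x y)))))) := by
      rw [h32]; ring
    rw [heq, hK]
    refine mul_le_mul_of_nonneg_left (mul_le_mul_of_nonneg_left ?_ hege.le) (by norm_num)
    exact mul3_le (mul_nonneg hege.le (mul_nonneg hsE.le hSVbnn))
      (mul_nonneg hsE.le (Real.sqrt_nonneg _)) (mul_nonneg hsE.le (Real.sqrt_nonneg _))
      hbsupv hb4b ha2
  have hB8 : ε ^ ((1:ℝ)/2 + γ) * ε * (2 * supOm L vb)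
      * (Real.sqrt (sq2 L (fun x y => y * pdx (pdy ub) x y))
        * Real.sqrt (sq2 L (fun x y => y * u x y))) ≤ 2 * K := by
    have heq : ε ^ ((1:ℝ)/2 + γ) * ε * (2 * supOm L vb)
        * (Real.sqrt (sq2 L (fun x y => y * pdx (pdy ub) x y))
          * Real.sqrt (sq2 L (fun x y => y * u x y)))
        = 2 * (ε ^ (γ/2) * ((ε ^ (γ/2) * (Real.sqrt ε * supOm L vb))
          * ((Real.sqrt ε * Real.sqrt (sq2 L (fun x y => y * pdx (pdy ub) x y)))
            * (Real.sqrt ε * Real.sqrt (sq2 L (fun x y => y * u x y)))))) := by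
      rw [h32]; ring
    rw [heq, hK]
    refine mul_le_mul_of_nonneg_left (mul_le_mul_of_nonneg_left ?_ hege.le) (by norm_num)
    exact mul3_le (mul_nonneg hege.le (mul_nonneg hsE.le hSVbnn))
      (mul_nonneg hsE.le (Real.sqrt_nonneg _)) (mul_nonneg hsE.le (Real.sqrt_nonneg _))
      hbsupv hb4b hyu2
  have hB9 : ε ^ ((1:ℝ)/2 + γ) * ε * supOm L vb
      * (Real.sqrt (sq2 L (fun x y => y * pdy ub x y))
        * Real.sqrt (sq2 L (fun x y => y * pdx (pdx u) x y))) ≤ K := by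
    have heq : ε ^ ((1:ℝ)/2 + γ) * ε * supOm L vb
        * (Real.sqrt (sq2 L (fun x y => y * pdy ub x y))
          * Real.sqrt (sq2 L (fun x y => y * pdx (pdx u) x y)))
        = ε ^ (γ/2) * ((ε ^ (γ/2) * (Real.sqrt ε * supOm L vb))
          * (Real.sqrt (sq2 L (fun x y => y * pdy ub x y))
            * (ε * Real.sqrt (sq2 L (fun x y => y * pdx (pdx u) x y))))) := by
      rw [hc2eqA]; ring
    rw [heq, hK]
    refine mul_le_mul_of_nonneg_left ?_ hege.le
    exact mul3_le (mul_nonneg hege.le (mul_nonneg hsE.le hSVbnn)) (Real.sqrt_nonneg _)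
      (mul_nonneg hε.le (Real.sqrt_nonneg _)) hbsupv hb1 ha4c
  have hB10 : ε ^ ((1:ℝ)/2 + γ) * ε * (2 * supOm L vb)
      * (Real.sqrt (sq2 L (fun x y => y * pdy ub x y))
        * Real.sqrt (sq2 L (fun x y => y * pdx u x y))) ≤ 2 * K := by
    have heq : ε ^ ((1:ℝ)/2 + γ) * ε * (2 * supOm L vb)
        * (Real.sqrt (sq2 L (fun x y => y * pdy ub x y))
          * Real.sqrt (sq2 L (fun x y => y * pdx u x y)))
        = 2 * (Real.sqrt ε * (ε ^ (γ/2) * ((ε ^ (γ/2) * (Real.sqrt ε * supOm L vb))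
          * (Real.sqrt (sq2 L (fun x y => y * pdy ub x y))
            * (Real.sqrt ε * Real.sqrt (sq2 L (fun x y => y * pdx u x y))))))) := by
      rw [h32]; ring
    rw [heq, hK]
    refine mul_le_mul_of_nonneg_left ?_ (by norm_num : (0:ℝ) ≤ 2)
    have hin : ε ^ (γ/2) * ((ε ^ (γ/2) * (Real.sqrt ε * supOm L vb))
        * (Real.sqrt (sq2 L (fun x y => y * pdy ub x y))
          * (Real.sqrt ε * Real.sqrt (sq2 L (fun x y => y * pdx u x y)))))
        ≤ ε ^ (γ/2) * (normX L ε γ ub vb * (normX L ε γ ub vb * normX L ε γ u v)) :=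
      mul_le_mul_of_nonneg_left (mul3_le (mul_nonneg hege.le (mul_nonneg hsE.le hSVbnn))
        (Real.sqrt_nonneg _) (mul_nonneg hsE.le (Real.sqrt_nonneg _)) hbsupv hb1 ha2) hege.le
    have h0 : 0 ≤ ε ^ (γ/2) * ((ε ^ (γ/2) * (Real.sqrt ε * supOm L vb))
        * (Real.sqrt (sq2 L (fun x y => y * pdy ub x y))
          * (Real.sqrt ε * Real.sqrt (sq2 L (fun x y => y * pdx u x y))))) :=
      mul_nonneg hege.le (mul_nonneg (mul_nonneg hege.le (mul_nonneg hsE.le hSVbnn))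
        (mul_nonneg (Real.sqrt_nonneg _) (mul_nonneg hsE.le (Real.sqrt_nonneg _))))
    calc Real.sqrt ε * _ ≤ 1 * (ε ^ (γ/2) * (normX L ε γ ub vb
        * (normX L ε γ ub vb * normX L ε γ u v))) := mul_le_mul hsE1 hin h0 zero_le_one
      _ = _ := one_mul _
  have hB11 : ε ^ ((1:ℝ)/2 + γ) * ε * supOm L ub
      * (Real.sqrt (sq2 L (fun x y => y * pdx ub x y))
        * Real.sqrt (sq2 L (fun x y => y * pdx (pdx u) x y))) ≤ K := by
    have heq : ε ^ ((1:ℝ)/2 + γ) * ε * supOm L ub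
        * (Real.sqrt (sq2 L (fun x y => y * pdx ub x y))
          * Real.sqrt (sq2 L (fun x y => y * pdx (pdx u) x y)))
        = ε ^ (γ/2) * ((ε ^ (γ/2) * supOm L ub)
          * ((Real.sqrt ε * Real.sqrt (sq2 L (fun x y => y * pdx ub x y)))
            * (ε * Real.sqrt (sq2 L (fun x y => y * pdx (pdx u) x y))))) := by
      rw [hc2eqA]; ring
    rw [heq, hK]
    refine mul_le_mul_of_nonneg_left ?_ hege.le
    exact mul3_le (mul_nonneg hege.le hSUbnn) (mul_nonneg hsE.le (Real.sqrt_nonneg _))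
      (mul_nonneg hε.le (Real.sqrt_nonneg _)) hbsup hb2 ha4c
  have hB12 : ε ^ ((1:ℝ)/2 + γ) * ε * (2 * supOm L ub)
      * (Real.sqrt (sq2 L (fun x y => y * pdx ub x y))
        * Real.sqrt (sq2 L (fun x y => y * pdx u x y))) ≤ 2 * K := by
    have heq : ε ^ ((1:ℝ)/2 + γ) * ε * (2 * supOm L ub)
        * (Real.sqrt (sq2 L (fun x y => y * pdx ub x y))
          * Real.sqrt (sq2 L (fun x y => y * pdx u x y)))
        = 2 * (Real.sqrt ε * (ε ^ (γ/2) * ((ε ^ (γ/2) * supOm L ub)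
          * ((Real.sqrt ε * Real.sqrt (sq2 L (fun x y => y * pdx ub x y)))
            * (Real.sqrt ε * Real.sqrt (sq2 L (fun x y => y * pdx u x y))))))) := by
      rw [h32]; ring
    rw [heq, hK]
    refine mul_le_mul_of_nonneg_left ?_ (by norm_num : (0:ℝ) ≤ 2)
    have hin : ε ^ (γ/2) * ((ε ^ (γ/2) * supOm L ub)
        * ((Real.sqrt ε * Real.sqrt (sq2 L (fun x y => y * pdx ub x y)))
          * (Real.sqrt ε * Real.sqrt (sq2 L (fun x y => y * pdx u x y)))))
        ≤ ε ^ (γ/2) * (normX L ε γ ub vb * (normX L ε γ ub vb * normX L ε γ u v)) :=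
      mul_le_mul_of_nonneg_left (mul3_le (mul_nonneg hege.le hSUbnn)
        (mul_nonneg hsE.le (Real.sqrt_nonneg _)) (mul_nonneg hsE.le (Real.sqrt_nonneg _))
        hbsup hb2 ha2) hege.le
    have h0 : 0 ≤ ε ^ (γ/2) * ((ε ^ (γ/2) * supOm L ub)
        * ((Real.sqrt ε * Real.sqrt (sq2 L (fun x y => y * pdx ub x y)))
          * (Real.sqrt ε * Real.sqrt (sq2 L (fun x y => y * pdx u x y))))) :=
      mul_nonneg hege.le (mul_nonneg (mul_nonneg hege.le hSUbnn)
        (mul_nonneg (mul_nonneg hsE.le (Real.sqrt_nonneg _))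
          (mul_nonneg hsE.le (Real.sqrt_nonneg _))))
    calc Real.sqrt ε * _ ≤ 1 * (ε ^ (γ/2) * (normX L ε γ ub vb
        * (normX L ε γ ub vb * normX L ε γ u v))) := mul_le_mul hsE1 hin h0 zero_le_one
      _ = _ := one_mul _
  have hBs1 : ε ^ ((1:ℝ)/2 + γ) * ε * supOm L vb
      * (Real.sqrt (sqB (fun y => y * pdy ub L y)) * Real.sqrt (sqB (fun y => y * pdx u L y))) ≤ K := by
    have heq : ε ^ ((1:ℝ)/2 + γ) * ε * supOm L vb
        * (Real.sqrt (sqB (fun y => y * pdy ub L y)) * Real.sqrt (sqB (fun y => y * pdx u L y)))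
        = Real.sqrt ε * (ε ^ (γ/2) * ((ε ^ (γ/2) * (Real.sqrt ε * supOm L vb))
          * (Real.sqrt (sqB (fun y => y * pdy ub L y)) * (Real.sqrt ε * Real.sqrt (sqB (fun y => y * pdx u L y)))))) := by
      rw [h32]; ring
    rw [heq, hK]
    have hin : ε ^ (γ/2) * ((ε ^ (γ/2) * (Real.sqrt ε * supOm L vb)) * (Real.sqrt (sqB (fun y => y * pdy ub L y)) * (Real.sqrt ε * Real.sqrt (sqB (fun y => y * pdx u L y)))))
        ≤ ε ^ (γ/2) * (normX L ε γ ub vb * (normX L ε γ ub vb * normX L ε γ u v)) :=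
      mul_le_mul_of_nonneg_left (mul3_le (mul_nonneg hege.le (mul_nonneg hsE.le hSVbnn)) (Real.sqrt_nonneg _) (mul_nonneg hsE.le (Real.sqrt_nonneg _)) hbsupv hbbd1 habd2) hege.le
    have h0 : 0 ≤ ε ^ (γ/2) * ((ε ^ (γ/2) * (Real.sqrt ε * supOm L vb)) * (Real.sqrt (sqB (fun y => y * pdy ub L y)) * (Real.sqrt ε * Real.sqrt (sqB (fun y => y * pdx u L y))))) :=
      mul_nonneg hege.le (mul_nonneg (mul_nonneg hege.le (mul_nonneg hsE.le hSVbnn)) (mul_nonneg (Real.sqrt_nonneg _) (mul_nonneg hsE.le (Real.sqrt_nonneg _))))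
    calc Real.sqrt ε * (ε ^ (γ/2) * ((ε ^ (γ/2) * (Real.sqrt ε * supOm L vb)) * (Real.sqrt (sqB (fun y => y * pdy ub L y)) * (Real.sqrt ε * Real.sqrt (sqB (fun y => y * pdx u L y))))))
        ≤ 1 * (ε ^ (γ/2) * (normX L ε γ ub vb
          * (normX L ε γ ub vb * normX L ε γ u v))) := mul_le_mul hsE1 hin h0 zero_le_one
      _ = _ := one_mul _
  have hBs2 : ε ^ ((1:ℝ)/2 + γ) * ε * supOm L vb
      * (Real.sqrt (sqB (fun y => y * pdy ub L y)) * Real.sqrt (sqB (fun y => y * u L y))) ≤ K := by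
    have heq : ε ^ ((1:ℝ)/2 + γ) * ε * supOm L vb
        * (Real.sqrt (sqB (fun y => y * pdy ub L y)) * Real.sqrt (sqB (fun y => y * u L y)))
        = Real.sqrt ε * (ε ^ (γ/2) * ((ε ^ (γ/2) * (Real.sqrt ε * supOm L vb))
          * (Real.sqrt (sqB (fun y => y * pdy ub L y)) * (Real.sqrt ε * Real.sqrt (sqB (fun y => y * u L y)))))) := by
      rw [h32]; ring
    rw [heq, hK]
    have hin : ε ^ (γ/2) * ((ε ^ (γ/2) * (Real.sqrt ε * supOm L vb)) * (Real.sqrt (sqB (fun y => y * pdy ub L y)) * (Real.sqrt ε * Real.sqrt (sqB (fun y => y * u L y)))))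
        ≤ ε ^ (γ/2) * (normX L ε γ ub vb * (normX L ε γ ub vb * normX L ε γ u v)) :=
      mul_le_mul_of_nonneg_left (mul3_le (mul_nonneg hege.le (mul_nonneg hsE.le hSVbnn)) (Real.sqrt_nonneg _) (mul_nonneg hsE.le (Real.sqrt_nonneg _)) hbsupv hbbd1 hyuL2) hege.le
    have h0 : 0 ≤ ε ^ (γ/2) * ((ε ^ (γ/2) * (Real.sqrt ε * supOm L vb)) * (Real.sqrt (sqB (fun y => y * pdy ub L y)) * (Real.sqrt ε * Real.sqrt (sqB (fun y => y * u L y))))) :=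
      mul_nonneg hege.le (mul_nonneg (mul_nonneg hege.le (mul_nonneg hsE.le hSVbnn)) (mul_nonneg (Real.sqrt_nonneg _) (mul_nonneg hsE.le (Real.sqrt_nonneg _))))
    calc Real.sqrt ε * (ε ^ (γ/2) * ((ε ^ (γ/2) * (Real.sqrt ε * supOm L vb)) * (Real.sqrt (sqB (fun y => y * pdy ub L y)) * (Real.sqrt ε * Real.sqrt (sqB (fun y => y * u L y))))))
        ≤ 1 * (ε ^ (γ/2) * (normX L ε γ ub vb
          * (normX L ε γ ub vb * normX L ε γ u v))) := mul_le_mul hsE1 hin h0 zero_le_one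
      _ = _ := one_mul _
  have hBs3 : ε ^ ((1:ℝ)/2 + γ) * ε * supOm L ub
      * (Real.sqrt (sqB (fun y => y * pdx ub L y)) * Real.sqrt (sqB (fun y => y * pdx u L y))) ≤ K := by
    have heq : ε ^ ((1:ℝ)/2 + γ) * ε * supOm L ub
        * (Real.sqrt (sqB (fun y => y * pdx ub L y)) * Real.sqrt (sqB (fun y => y * pdx u L y)))
        = Real.sqrt ε * (ε ^ (γ/2) * ((ε ^ (γ/2) * supOm L ub)
          * ((Real.sqrt ε * Real.sqrt (sqB (fun y => y * pdx ub L y))) * (Real.sqrt ε * Real.sqrt (sqB (fun y => y * pdx u L y)))))) := by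
      rw [h32]; ring
    rw [heq, hK]
    have hin : ε ^ (γ/2) * ((ε ^ (γ/2) * supOm L ub) * ((Real.sqrt ε * Real.sqrt (sqB (fun y => y * pdx ub L y))) * (Real.sqrt ε * Real.sqrt (sqB (fun y => y * pdx u L y)))))
        ≤ ε ^ (γ/2) * (normX L ε γ ub vb * (normX L ε γ ub vb * normX L ε γ u v)) :=
      mul_le_mul_of_nonneg_left (mul3_le (mul_nonneg hege.le hSUbnn) (mul_nonneg hsE.le (Real.sqrt_nonneg _)) (mul_nonneg hsE.le (Real.sqrt_nonneg _)) hbsup hbbd2 habd2) hege.le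
    have h0 : 0 ≤ ε ^ (γ/2) * ((ε ^ (γ/2) * supOm L ub) * ((Real.sqrt ε * Real.sqrt (sqB (fun y => y * pdx ub L y))) * (Real.sqrt ε * Real.sqrt (sqB (fun y => y * pdx u L y))))) :=
      mul_nonneg hege.le (mul_nonneg (mul_nonneg hege.le hSUbnn) (mul_nonneg (mul_nonneg hsE.le (Real.sqrt_nonneg _)) (mul_nonneg hsE.le (Real.sqrt_nonneg _))))
    calc Real.sqrt ε * (ε ^ (γ/2) * ((ε ^ (γ/2) * supOm L ub) * ((Real.sqrt ε * Real.sqrt (sqB (fun y => y * pdx ub L y))) * (Real.sqrt ε * Real.sqrt (sqB (fun y => y * pdx u L y))))))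
        ≤ 1 * (ε ^ (γ/2) * (normX L ε γ ub vb
          * (normX L ε γ ub vb * normX L ε γ u v))) := mul_le_mul hsE1 hin h0 zero_le_one
      _ = _ := one_mul _
  have hBs4 : ε ^ ((1:ℝ)/2 + γ) * ε * supOm L ub
      * (Real.sqrt (sqB (fun y => y * pdx ub L y)) * Real.sqrt (sqB (fun y => y * u L y))) ≤ K := by
    have heq : ε ^ ((1:ℝ)/2 + γ) * ε * supOm L ub
        * (Real.sqrt (sqB (fun y => y * pdx ub L y)) * Real.sqrt (sqB (fun y => y * u L y)))
        = Real.sqrt ε * (ε ^ (γ/2) * ((ε ^ (γ/2) * supOm L ub)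
          * ((Real.sqrt ε * Real.sqrt (sqB (fun y => y * pdx ub L y))) * (Real.sqrt ε * Real.sqrt (sqB (fun y => y * u L y)))))) := by
      rw [h32]; ring
    rw [heq, hK]
    have hin : ε ^ (γ/2) * ((ε ^ (γ/2) * supOm L ub) * ((Real.sqrt ε * Real.sqrt (sqB (fun y => y * pdx ub L y))) * (Real.sqrt ε * Real.sqrt (sqB (fun y => y * u L y)))))
        ≤ ε ^ (γ/2) * (normX L ε γ ub vb * (normX L ε γ ub vb * normX L ε γ u v)) :=
      mul_le_mul_of_nonneg_left (mul3_le (mul_nonneg hege.le hSUbnn) (mul_nonneg hsE.le (Real.sqrt_nonneg _)) (mul_nonneg hsE.le (Real.sqrt_nonneg _)) hbsup hbbd2 hyuL2) hege.le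
    have h0 : 0 ≤ ε ^ (γ/2) * ((ε ^ (γ/2) * supOm L ub) * ((Real.sqrt ε * Real.sqrt (sqB (fun y => y * pdx ub L y))) * (Real.sqrt ε * Real.sqrt (sqB (fun y => y * u L y))))) :=
      mul_nonneg hege.le (mul_nonneg (mul_nonneg hege.le hSUbnn) (mul_nonneg (mul_nonneg hsE.le (Real.sqrt_nonneg _)) (mul_nonneg hsE.le (Real.sqrt_nonneg _))))
    calc Real.sqrt ε * (ε ^ (γ/2) * ((ε ^ (γ/2) * supOm L ub) * ((Real.sqrt ε * Real.sqrt (sqB (fun y => y * pdx ub L y))) * (Real.sqrt ε * Real.sqrt (sqB (fun y => y * u L y))))))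
        ≤ 1 * (ε ^ (γ/2) * (normX L ε γ ub vb
          * (normX L ε γ ub vb * normX L ε γ u v))) := mul_le_mul hsE1 hin h0 zero_le_one
      _ = _ := one_mul _
  -- pointwise identity for I2
  have hpt2 : (fun p : ℝ × ℝ => pdy (Nv ε γ ub vb) p.1 p.2 * (ε * pdx (wmul u) p.1 p.2))
      = fun p : ℝ × ℝ => ε ^ ((1:ℝ)/2 + γ) * ε * (pdx Vf p.1 p.2 * ψf p.1 p.2)
        + (ε ^ ((1:ℝ)/2 + γ) * ε * (-2 * ((1 - p.1) * ub p.1 p.2)) * ((p.2 * pdx (pdx ub) p.1 p.2) * (p.2 * pdx u p.1 p.2)) + (ε ^ ((1:ℝ)/2 + γ) * ε * (2 * ub p.1 p.2) * ((p.2 * pdx (pdx ub) p.1 p.2) * (p.2 * u p.1 p.2)) + (ε ^ ((1:ℝ)/2 + γ) * ε * (-2 * ((1 - p.1) * vb p.1 p.2)) * ((p.2 * pdx (pdy ub) p.1 p.2) * (p.2 * pdx u p.1 p.2)) + ε ^ ((1:ℝ)/2 + γ) * ε * (2 * vb p.1 p.2) * ((p.2 * pdx (pdy ub) p.1 p.2)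 * (p.2 * u p.1 p.2))))) := by
    funext p
    rw [pdy_Nv_eq hub.smooth_u hub.smooth_v hub.divfree p.1 p.2,
      pdx_wmul hu.smooth_u p.1 p.2, hPV p.1 p.2]
    simp only [hψf]
    ring
  have hI2bound : |intO L (fun x y => pdy (Nv ε γ ub vb) x y * (ε * pdx (wmul u) x y))|
      ≤ 18 * K := by
    by_cases hI2case : Integrable
      (fun p : ℝ × ℝ => pdy (Nv ε γ ub vb) p.1 p.2 * (ε * pdx (wmul u) p.1 p.2)) (muOm L)
    swap
    · rw [intO_eq, integral_undef hI2case, abs_zero]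
      linarith
    have hIT5 : Integrable (fun p : ℝ × ℝ => ε ^ ((1:ℝ)/2 + γ) * ε * (-2 * ((1 - p.1) * ub p.1 p.2)) * ((p.2 * pdx (pdx ub) p.1 p.2) * (p.2 * pdx u p.1 p.2))) (muOm L) := hT5.1
    have hIT6 : Integrable (fun p : ℝ × ℝ => ε ^ ((1:ℝ)/2 + γ) * ε * (2 * ub p.1 p.2) * ((p.2 * pdx (pdx ub) p.1 p.2) * (p.2 * u p.1 p.2))) (muOm L) := hT6.1
    have hIT7 : Integrable (fun p : ℝ × ℝ => ε ^ ((1:ℝ)/2 + γ) * ε * (-2 * ((1 - p.1) * vb p.1 p.2)) * ((p.2 * pdx (pdy ub) p.1 p.2) * (p.2 * pdx u p.1 p.2))) (muOm L) := hT7.1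
    have hIT8 : Integrable (fun p : ℝ × ℝ => ε ^ ((1:ℝ)/2 + γ) * ε * (2 * vb p.1 p.2) * ((p.2 * pdx (pdy ub) p.1 p.2) * (p.2 * u p.1 p.2))) (muOm L) := hT8.1
    have hIT9 : Integrable (fun p : ℝ × ℝ => ε ^ ((1:ℝ)/2 + γ) * ε * ((1 - p.1) * vb p.1 p.2) * ((p.2 * pdy ub p.1 p.2) * (p.2 * pdx (pdx u) p.1 p.2))) (muOm L) := hT9.1
    have hIT10 : Integrable (fun p : ℝ × ℝ => ε ^ ((1:ℝ)/2 + γ) * ε * (-2 * vb p.1 p.2) * ((p.2 * pdy ub p.1 p.2) * (p.2 * pdx u p.1 p.2))) (muOm L) := hT10.1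
    have hIT11 : Integrable (fun p : ℝ × ℝ => ε ^ ((1:ℝ)/2 + γ) * ε * ((1 - p.1) * ub p.1 p.2) * ((p.2 * pdx ub p.1 p.2) * (p.2 * pdx (pdx u) p.1 p.2))) (muOm L) := hT11.1
    have hIT12 : Integrable (fun p : ℝ × ℝ => ε ^ ((1:ℝ)/2 + γ) * ε * (-2 * ub p.1 p.2) * ((p.2 * pdx ub p.1 p.2) * (p.2 * pdx u p.1 p.2))) (muOm L) := hT12.1
    have hIT78 : Integrable (fun p : ℝ × ℝ => ε ^ ((1:ℝ)/2 + γ) * ε * (-2 * ((1 - p.1) * vb p.1 p.2)) * ((p.2 * pdx (pdy ub) p.1 p.2) * (p.2 * pdx u p.1 p.2)) + ε ^ ((1:ℝ)/2 + γ) * ε * (2 * vb p.1 p.2) * ((p.2 * pdx (pdy ub) p.1 p.2) * (p.2 * u p.1 p.2))) (muOm L) := hIT7.add hIT8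
    have hIT678 : Integrable (fun p : ℝ × ℝ => ε ^ ((1:ℝ)/2 + γ) * ε * (2 * ub p.1 p.2) * ((p.2 * pdx (pdx ub) p.1 p.2) * (p.2 * u p.1 p.2)) + (ε ^ ((1:ℝ)/2 + γ) * ε * (-2 * ((1 - p.1) * vb p.1 p.2)) * ((p.2 * pdx (pdy ub) p.1 p.2) * (p.2 * pdx u p.1 p.2)) + ε ^ ((1:ℝ)/2 + γ) * ε * (2 * vb p.1 p.2) * ((p.2 * pdx (pdy ub) p.1 p.2) * (p.2 * u p.1 p.2)))) (muOm L) := hIT6.add hIT78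
    have hIT5678 : Integrable (fun p : ℝ × ℝ => ε ^ ((1:ℝ)/2 + γ) * ε * (-2 * ((1 - p.1) * ub p.1 p.2)) * ((p.2 * pdx (pdx ub) p.1 p.2) * (p.2 * pdx u p.1 p.2)) + (ε ^ ((1:ℝ)/2 + γ) * ε * (2 * ub p.1 p.2) * ((p.2 * pdx (pdx ub) p.1 p.2) * (p.2 * u p.1 p.2)) + (ε ^ ((1:ℝ)/2 + γ) * ε * (-2 * ((1 - p.1) * vb p.1 p.2)) * ((p.2 * pdx (pdy ub) p.1 p.2) * (p.2 * pdx u p.1 p.2)) + ε ^ ((1:ℝ)/2 + γ) * ε * (2 * vb p.1 p.2) * ((p.2 * pdx (pdy ub) p.1 p.2) * (p.2 * u p.1 p.2))))) (muOm L) :=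
      hIT5.add hIT678
    have hGV_int : Integrable (fun p : ℝ × ℝ => ε ^ ((1:ℝ)/2 + γ) * ε * (pdx Vf p.1 p.2 * ψf p.1 p.2)) (muOm L) := by
      have hfe : (fun p : ℝ × ℝ => ε ^ ((1:ℝ)/2 + γ) * ε * (pdx Vf p.1 p.2 * ψf p.1 p.2))
          = fun p : ℝ × ℝ => pdy (Nv ε γ ub vb) p.1 p.2 * (ε * pdx (wmul u) p.1 p.2)
            - (ε ^ ((1:ℝ)/2 + γ) * ε * (-2 * ((1 - p.1) * ub p.1 p.2)) * ((p.2 * pdx (pdx ub) p.1 p.2) * (p.2 * pdx u p.1 p.2)) + (ε ^ ((1:ℝ)/2 + γ) * ε * (2 * ub p.1 p.2) * ((p.2 * pdx (pdx ub) p.1 p.2) * (p.2 * u p.1 p.2)) + (ε ^ ((1:ℝ)/2 + γ) * ε * (-2 * ((1 - p.1) * vb p.1 p.2)) * ((p.2 * pdx (pdy ub) p.1 p.2) * (p.2 * pdx u p.1 p.2)) + ε ^ ((1:ℝ)/2 + γ) * ε * (2 * vb p.1 p.2) * ((p.2 * pdx (pdy ub) p.1 p.2) * (p.2 * u p.1 p.2)))))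 := by
        funext p
        have h := congrFun hpt2 p
        linarith [h]
      rw [hfe]
      exact hI2case.sub hIT5678
    have hsplit : (∫ p, pdy (Nv ε γ ub vb) p.1 p.2 * (ε * pdx (wmul u) p.1 p.2) ∂(muOm L))
        = (∫ p, ε ^ ((1:ℝ)/2 + γ) * ε * (pdx Vf p.1 p.2 * ψf p.1 p.2) ∂(muOm L))
          + ((∫ p, ε ^ ((1:ℝ)/2 + γ) * ε * (-2 * ((1 - p.1) * ub p.1 p.2)) * ((p.2 * pdx (pdx ub) p.1 p.2) * (p.2 * pdx u p.1 p.2)) ∂(muOm L)) + ((∫ p, ε ^ ((1:ℝ)/2 + γ) * ε * (2 * ub p.1 p.2) * ((p.2 * pdx (pdx ub) p.1 p.2) * (p.2 * u p.1 p.2)) ∂(muOm L))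
            + ((∫ p, ε ^ ((1:ℝ)/2 + γ) * ε * (-2 * ((1 - p.1) * vb p.1 p.2)) * ((p.2 * pdx (pdy ub) p.1 p.2) * (p.2 * pdx u p.1 p.2)) ∂(muOm L)) + (∫ p, ε ^ ((1:ℝ)/2 + γ) * ε * (2 * vb p.1 p.2) * ((p.2 * pdx (pdy ub) p.1 p.2) * (p.2 * u p.1 p.2)) ∂(muOm L))))) := by
      rw [hpt2, integral_add hGV_int hIT5678, integral_add hIT5 hIT678,
        integral_add hIT6 hIT78, integral_add hIT7 hIT8]
    have hprodGV : Integrable (fun p : ℝ × ℝ => ε ^ ((1:ℝ)/2 + γ) * ε * (pdx Vf p.1 p.2 * ψf p.1 p.2))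
        ((volume.restrict (Ioo (0:ℝ) L)).prod (volume.restrict (Ioi (0:ℝ)))) := by
      rw [← muOm_eq]
      exact hGV_int
    have hGVeq : (∫ p, ε ^ ((1:ℝ)/2 + γ) * ε * (pdx Vf p.1 p.2 * ψf p.1 p.2) ∂(muOm L))
        = ∫ y in Ioi (0:ℝ), (∫ x in Ioo (0:ℝ) L,
            ε ^ ((1:ℝ)/2 + γ) * ε * (pdx Vf x y * ψf x y)) := by
      rw [muOm_eq]
      exact integral_prod_symm _ hprodGV
    have hIntOn1 : ∀ y, IntegrableOn (fun x => pdx Vf x y * ψf x y) (Ioo 0 L) volume := by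
      intro y
      have hc : Continuous (fun x => pdx Vf x y * ψf x y) :=
        ((contDiff_pdx hVsm).continuous.comp (continuous_id.prodMk continuous_const)).mul
          (hψsm.continuous.comp (continuous_id.prodMk continuous_const))
      exact hc.integrableOn_Icc.mono_set Ioo_subset_Icc_self
    have hIntOn2 : ∀ y, IntegrableOn (fun x => Vf x y * pdx ψf x y) (Ioo 0 L) volume := by
      intro y
      have hc : Continuous (fun x => Vf x y * pdx ψf x y) :=
        (hVsm.continuous.comp (continuous_id.prodMk continuous_const)).mul
          ((contDiff_pdx hψsm).continuous.comp (continuous_id.prodMk continuous_const))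
      exact hc.integrableOn_Icc.mono_set Ioo_subset_Icc_self
    have hinner : ∀ y, (∫ x in Ioo (0:ℝ) L, ε ^ ((1:ℝ)/2 + γ) * ε * (pdx Vf x y * ψf x y))
        = ε ^ ((1:ℝ)/2 + γ) * ε * (Vf L y * ψf L y)
          - ∫ x in Ioo (0:ℝ) L, ε ^ ((1:ℝ)/2 + γ) * ε * (Vf x y * pdx ψf x y) := by
      intro y
      have hib := ibp_x hL hVsm hψsm hV0 y
      rw [integral_add (hIntOn1 y) (hIntOn2 y)] at hib
      have e1 : ∫ x in Ioo (0:ℝ) L, ε ^ ((1:ℝ)/2 + γ) * ε * (pdx Vf x y * ψf x y)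
          = ε ^ ((1:ℝ)/2 + γ) * ε * ∫ x in Ioo (0:ℝ) L, pdx Vf x y * ψf x y := by
        simpa [smul_eq_mul] using integral_smul (μ := volume.restrict (Ioo (0:ℝ) L))
          (ε ^ ((1:ℝ)/2 + γ) * ε) (fun x => pdx Vf x y * ψf x y)
      have e2 : ∫ x in Ioo (0:ℝ) L, ε ^ ((1:ℝ)/2 + γ) * ε * (Vf x y * pdx ψf x y)
          = ε ^ ((1:ℝ)/2 + γ) * ε * ∫ x in Ioo (0:ℝ) L, Vf x y * pdx ψf x y := by
        simpa [smul_eq_mul] using integral_smul (μ := volume.restrict (Ioo (0:ℝ) L))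
          (ε ^ ((1:ℝ)/2 + γ) * ε) (fun x => Vf x y * pdx ψf x y)
      have e3 : ∫ x in Ioo (0:ℝ) L, pdx Vf x y * ψf x y
          = Vf L y * ψf L y - ∫ x in Ioo (0:ℝ) L, Vf x y * pdx ψf x y := by linarith
      rw [e1, e2, e3]
      ring
    have hIS1 : Integrable (fun y => ε ^ ((1:ℝ)/2 + γ) * ε * ((1 - L) * vb L y) * ((y * pdy ub L y) * (y * pdx u L y))) (volume.restrict (Ioi (0:ℝ))) := hS1.1
    have hIS2 : Integrable (fun y => ε ^ ((1:ℝ)/2 + γ) * ε * (-(vb L y)) * ((y * pdy ub L y) * (y * u L y))) (volume.restrict (Ioi (0:ℝ))) := hS2.1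
    have hIS3 : Integrable (fun y => ε ^ ((1:ℝ)/2 + γ) * ε * ((1 - L) * ub L y) * ((y * pdx ub L y) * (y * pdx u L y))) (volume.restrict (Ioi (0:ℝ))) := hS3.1
    have hIS4 : Integrable (fun y => ε ^ ((1:ℝ)/2 + γ) * ε * (-(ub L y)) * ((y * pdx ub L y) * (y * u L y))) (volume.restrict (Ioi (0:ℝ))) := hS4.1
    have hIS34 : Integrable (fun y => ε ^ ((1:ℝ)/2 + γ) * ε * ((1 - L) * ub L y) * ((y * pdx ub L y) * (y * pdx u L y)) + ε ^ ((1:ℝ)/2 + γ) * ε * (-(ub L y)) * ((y * pdx ub L y) * (y * u L y))) (volume.restrict (Ioi (0:ℝ))) := hIS3.add hIS4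
    have hIS234 : Integrable (fun y => ε ^ ((1:ℝ)/2 + γ) * ε * (-(vb L y)) * ((y * pdy ub L y) * (y * u L y)) + (ε ^ ((1:ℝ)/2 + γ) * ε * ((1 - L) * ub L y) * ((y * pdx ub L y) * (y * pdx u L y)) + ε ^ ((1:ℝ)/2 + γ) * ε * (-(ub L y)) * ((y * pdx ub L y) * (y * u L y)))) (volume.restrict (Ioi (0:ℝ))) := hIS2.add hIS34
    have hbdry_eq : (fun y => ε ^ ((1:ℝ)/2 + γ) * ε * (Vf L y * ψf L y))
        = fun y => ε ^ ((1:ℝ)/2 + γ) * ε * ((1 - L) * vb L y) * ((y * pdy ub L y) * (y * pdx u L y)) + (ε ^ ((1:ℝ)/2 + γ) * ε * (-(vb L y)) * ((y * pdy ub L y) * (y * u L y)) + (ε ^ ((1:ℝ)/2 + γ) * ε * ((1 - L) * ub L y) * ((y * pdx ub L y) * (y * pdx u L y)) + ε ^ ((1:ℝ)/2 + γ) * ε * (-(ub L y)) * ((y * pdx ub L y) * (y * u L y)))) := by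
      funext y
      simp only [hVf, hψf]
      ring
    have hbdry_int : Integrable (fun y => ε ^ ((1:ℝ)/2 + γ) * ε * (Vf L y * ψf L y)) (volume.restrict (Ioi (0:ℝ))) := by
      rw [hbdry_eq]
      exact hIS1.add hIS234
    have hIT1112 : Integrable (fun p : ℝ × ℝ => ε ^ ((1:ℝ)/2 + γ) * ε * ((1 - p.1) * ub p.1 p.2) * ((p.2 * pdx ub p.1 p.2) * (p.2 * pdx (pdx u) p.1 p.2)) + ε ^ ((1:ℝ)/2 + γ) * ε * (-2 * ub p.1 p.2) * ((p.2 * pdx ub p.1 p.2) * (p.2 * pdx u p.1 p.2))) (muOm L) := hIT11.add hIT12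
    have hIT101112 : Integrable (fun p : ℝ × ℝ => ε ^ ((1:ℝ)/2 + γ) * ε * (-2 * vb p.1 p.2) * ((p.2 * pdy ub p.1 p.2) * (p.2 * pdx u p.1 p.2)) + (ε ^ ((1:ℝ)/2 + γ) * ε * ((1 - p.1) * ub p.1 p.2) * ((p.2 * pdx ub p.1 p.2) * (p.2 * pdx (pdx u) p.1 p.2)) + ε ^ ((1:ℝ)/2 + γ) * ε * (-2 * ub p.1 p.2) * ((p.2 * pdx ub p.1 p.2) * (p.2 * pdx u p.1 p.2)))) (muOm L) :=
      hIT10.add hIT1112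
    have hVψx_eq : (fun p : ℝ × ℝ => ε ^ ((1:ℝ)/2 + γ) * ε * (Vf p.1 p.2 * pdx ψf p.1 p.2))
        = fun p : ℝ × ℝ => ε ^ ((1:ℝ)/2 + γ) * ε * ((1 - p.1) * vb p.1 p.2) * ((p.2 * pdy ub p.1 p.2) * (p.2 * pdx (pdx u) p.1 p.2)) + (ε ^ ((1:ℝ)/2 + γ) * ε * (-2 * vb p.1 p.2) * ((p.2 * pdy ub p.1 p.2) * (p.2 * pdx u p.1 p.2)) + (ε ^ ((1:ℝ)/2 + γ) * ε * ((1 - p.1) * ub p.1 p.2) * ((p.2 * pdx ub p.1 p.2) * (p.2 * pdx (pdx u) p.1 p.2)) + ε ^ ((1:ℝ)/2 + γ) * ε * (-2 * ub p.1 p.2) * ((p.2 * pdx ub p.1 p.2) * (p.2 * pdx u p.1 p.2)))) := by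
      funext p
      rw [hPψ p.1 p.2]
      simp only [hVf]
      ring
    have hVψx_int : Integrable (fun p : ℝ × ℝ => ε ^ ((1:ℝ)/2 + γ) * ε * (Vf p.1 p.2 * pdx ψf p.1 p.2)) (muOm L) := by
      rw [hVψx_eq]
      exact hIT9.add hIT101112
    have hVψx_prod : Integrable (fun p : ℝ × ℝ => ε ^ ((1:ℝ)/2 + γ) * ε * (Vf p.1 p.2 * pdx ψf p.1 p.2))
        ((volume.restrict (Ioo (0:ℝ) L)).prod (volume.restrict (Ioi (0:ℝ)))) := by
      rw [← muOm_eq]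
      exact hVψx_int
    have hiter_int : Integrable (fun y => ∫ x in Ioo (0:ℝ) L,
        ε ^ ((1:ℝ)/2 + γ) * ε * (Vf x y * pdx ψf x y)) (volume.restrict (Ioi (0:ℝ))) :=
      hVψx_prod.integral_prod_right
    have hiter_eq : (∫ y in Ioi (0:ℝ), ∫ x in Ioo (0:ℝ) L,
        ε ^ ((1:ℝ)/2 + γ) * ε * (Vf x y * pdx ψf x y))
        = ∫ p, ε ^ ((1:ℝ)/2 + γ) * ε * (Vf p.1 p.2 * pdx ψf p.1 p.2) ∂(muOm L) := by
      rw [muOm_eq]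
      exact (integral_prod_symm _ hVψx_prod).symm
    have hGVval : (∫ p, ε ^ ((1:ℝ)/2 + γ) * ε * (pdx Vf p.1 p.2 * ψf p.1 p.2) ∂(muOm L))
        = (∫ y in Ioi (0:ℝ), ε ^ ((1:ℝ)/2 + γ) * ε * (Vf L y * ψf L y)) - ∫ p, ε ^ ((1:ℝ)/2 + γ) * ε * (Vf p.1 p.2 * pdx ψf p.1 p.2) ∂(muOm L) := by
      rw [hGVeq]
      rw [show (fun y => ∫ x in Ioo (0:ℝ) L, ε ^ ((1:ℝ)/2 + γ) * ε * (pdx Vf x y * ψf x y))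
          = fun y => ε ^ ((1:ℝ)/2 + γ) * ε * (Vf L y * ψf L y) - ∫ x in Ioo (0:ℝ) L, ε ^ ((1:ℝ)/2 + γ) * ε * (Vf x y * pdx ψf x y)
        from funext hinner]
      rw [integral_sub hbdry_int hiter_int, hiter_eq]
    have hVψxsplit : (∫ p, ε ^ ((1:ℝ)/2 + γ) * ε * (Vf p.1 p.2 * pdx ψf p.1 p.2) ∂(muOm L))
        = (∫ p, ε ^ ((1:ℝ)/2 + γ) * ε * ((1 - p.1) * vb p.1 p.2) * ((p.2 * pdy ub p.1 p.2) * (p.2 * pdx (pdx u) p.1 p.2)) ∂(muOm L)) + ((∫ p, ε ^ ((1:ℝ)/2 + γ) * ε * (-2 * vb p.1 p.2) * ((p.2 * pdy ub p.1 p.2) * (p.2 * pdx u p.1 p.2)) ∂(muOm L))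
          + ((∫ p, ε ^ ((1:ℝ)/2 + γ) * ε * ((1 - p.1) * ub p.1 p.2) * ((p.2 * pdx ub p.1 p.2) * (p.2 * pdx (pdx u) p.1 p.2)) ∂(muOm L)) + (∫ p, ε ^ ((1:ℝ)/2 + γ) * ε * (-2 * ub p.1 p.2) * ((p.2 * pdx ub p.1 p.2) * (p.2 * pdx u p.1 p.2)) ∂(muOm L)))) := by
      rw [hVψx_eq, integral_add hIT9 hIT101112, integral_add hIT10 hIT1112,
        integral_add hIT11 hIT12]
    have hbdrysplit : (∫ y in Ioi (0:ℝ), ε ^ ((1:ℝ)/2 + γ) * ε * (Vf L y * ψf L y))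
        = (∫ y, ε ^ ((1:ℝ)/2 + γ) * ε * ((1 - L) * vb L y) * ((y * pdy ub L y) * (y * pdx u L y)) ∂(volume.restrict (Ioi (0:ℝ)))) + ((∫ y, ε ^ ((1:ℝ)/2 + γ) * ε * (-(vb L y)) * ((y * pdy ub L y) * (y * u L y)) ∂(volume.restrict (Ioi (0:ℝ))))
          + ((∫ y, ε ^ ((1:ℝ)/2 + γ) * ε * ((1 - L) * ub L y) * ((y * pdx ub L y) * (y * pdx u L y)) ∂(volume.restrict (Ioi (0:ℝ)))) + (∫ y, ε ^ ((1:ℝ)/2 + γ) * ε * (-(ub L y)) * ((y * pdx ub L y) * (y * u L y)) ∂(volume.restrict (Ioi (0:ℝ)))))) := by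
      rw [hbdry_eq, integral_add hIS1 hIS234, integral_add hIS2 hIS34,
        integral_add hIS3 hIS4]
    -- individual absolute bounds
    have c5 := (show |∫ p, ε ^ ((1:ℝ)/2 + γ) * ε * (-2 * ((1 - p.1) * ub p.1 p.2)) * ((p.2 * pdx (pdx ub) p.1 p.2) * (p.2 * pdx u p.1 p.2)) ∂(muOm L)|
        ≤ ε ^ ((1:ℝ)/2 + γ) * ε * (2 * supOm L ub)
          * (Real.sqrt (sq2 L (fun x y => y * pdx (pdx ub) x y))
            * Real.sqrt (sq2 L (fun x y => y * pdx u x y))) from hT5.2).trans hB5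
    have c6 := (show |∫ p, ε ^ ((1:ℝ)/2 + γ) * ε * (2 * ub p.1 p.2) * ((p.2 * pdx (pdx ub) p.1 p.2) * (p.2 * u p.1 p.2)) ∂(muOm L)|
        ≤ ε ^ ((1:ℝ)/2 + γ) * ε * (2 * supOm L ub)
          * (Real.sqrt (sq2 L (fun x y => y * pdx (pdx ub) x y))
            * Real.sqrt (sq2 L (fun x y => y * u x y))) from hT6.2).trans hB6
    have c7 := (show |∫ p, ε ^ ((1:ℝ)/2 + γ) * ε * (-2 * ((1 - p.1) * vb p.1 p.2)) * ((p.2 * pdx (pdy ub) p.1 p.2) * (p.2 * pdx u p.1 p.2)) ∂(muOm L)|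
        ≤ ε ^ ((1:ℝ)/2 + γ) * ε * (2 * supOm L vb)
          * (Real.sqrt (sq2 L (fun x y => y * pdx (pdy ub) x y))
            * Real.sqrt (sq2 L (fun x y => y * pdx u x y))) from hT7.2).trans hB7
    have c8 := (show |∫ p, ε ^ ((1:ℝ)/2 + γ) * ε * (2 * vb p.1 p.2) * ((p.2 * pdx (pdy ub) p.1 p.2) * (p.2 * u p.1 p.2)) ∂(muOm L)|
        ≤ ε ^ ((1:ℝ)/2 + γ) * ε * (2 * supOm L vb)
          * (Real.sqrt (sq2 L (fun x y => y * pdx (pdy ub) x y))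
            * Real.sqrt (sq2 L (fun x y => y * u x y))) from hT8.2).trans hB8
    have c9 := (show |∫ p, ε ^ ((1:ℝ)/2 + γ) * ε * ((1 - p.1) * vb p.1 p.2) * ((p.2 * pdy ub p.1 p.2) * (p.2 * pdx (pdx u) p.1 p.2)) ∂(muOm L)|
        ≤ ε ^ ((1:ℝ)/2 + γ) * ε * supOm L vb
          * (Real.sqrt (sq2 L (fun x y => y * pdy ub x y))
            * Real.sqrt (sq2 L (fun x y => y * pdx (pdx u) x y))) from hT9.2).trans hB9
    have c10 := (show |∫ p, ε ^ ((1:ℝ)/2 + γ) * ε * (-2 * vb p.1 p.2) * ((p.2 * pdy ub p.1 p.2) * (p.2 * pdx u p.1 p.2)) ∂(muOm L)|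
        ≤ ε ^ ((1:ℝ)/2 + γ) * ε * (2 * supOm L vb)
          * (Real.sqrt (sq2 L (fun x y => y * pdy ub x y))
            * Real.sqrt (sq2 L (fun x y => y * pdx u x y))) from hT10.2).trans hB10
    have c11 := (show |∫ p, ε ^ ((1:ℝ)/2 + γ) * ε * ((1 - p.1) * ub p.1 p.2) * ((p.2 * pdx ub p.1 p.2) * (p.2 * pdx (pdx u) p.1 p.2)) ∂(muOm L)|
        ≤ ε ^ ((1:ℝ)/2 + γ) * ε * supOm L ub
          * (Real.sqrt (sq2 L (fun x y => y * pdx ub x y))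
            * Real.sqrt (sq2 L (fun x y => y * pdx (pdx u) x y))) from hT11.2).trans hB11
    have c12 := (show |∫ p, ε ^ ((1:ℝ)/2 + γ) * ε * (-2 * ub p.1 p.2) * ((p.2 * pdx ub p.1 p.2) * (p.2 * pdx u p.1 p.2)) ∂(muOm L)|
        ≤ ε ^ ((1:ℝ)/2 + γ) * ε * (2 * supOm L ub)
          * (Real.sqrt (sq2 L (fun x y => y * pdx ub x y))
            * Real.sqrt (sq2 L (fun x y => y * pdx u x y))) from hT12.2).trans hB12
    have d1 := (show |∫ y, ε ^ ((1:ℝ)/2 + γ) * ε * ((1 - L) * vb L y) * ((y * pdy ub L y) * (y * pdx u L y)) ∂(volume.restrict (Ioi (0:ℝ)))|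
        ≤ ε ^ ((1:ℝ)/2 + γ) * ε * supOm L vb
          * (Real.sqrt (sqB (fun y => y * pdy ub L y))
            * Real.sqrt (sqB (fun y => y * pdx u L y))) from hS1.2).trans hBs1
    have d2 := (show |∫ y, ε ^ ((1:ℝ)/2 + γ) * ε * (-(vb L y)) * ((y * pdy ub L y) * (y * u L y)) ∂(volume.restrict (Ioi (0:ℝ)))|
        ≤ ε ^ ((1:ℝ)/2 + γ) * ε * supOm L vb
          * (Real.sqrt (sqB (fun y => y * pdy ub L y))
            * Real.sqrt (sqB (fun y => y * u L y))) from hS2.2).trans hBs2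
    have d3 := (show |∫ y, ε ^ ((1:ℝ)/2 + γ) * ε * ((1 - L) * ub L y) * ((y * pdx ub L y) * (y * pdx u L y)) ∂(volume.restrict (Ioi (0:ℝ)))|
        ≤ ε ^ ((1:ℝ)/2 + γ) * ε * supOm L ub
          * (Real.sqrt (sqB (fun y => y * pdx ub L y))
            * Real.sqrt (sqB (fun y => y * pdx u L y))) from hS3.2).trans hBs3
    have d4 := (show |∫ y, ε ^ ((1:ℝ)/2 + γ) * ε * (-(ub L y)) * ((y * pdx ub L y) * (y * u L y)) ∂(volume.restrict (Ioi (0:ℝ)))|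
        ≤ ε ^ ((1:ℝ)/2 + γ) * ε * supOm L ub
          * (Real.sqrt (sqB (fun y => y * pdx ub L y))
            * Real.sqrt (sqB (fun y => y * u L y))) from hS4.2).trans hBs4
    have hb_bdry : |∫ y in Ioi (0:ℝ), ε ^ ((1:ℝ)/2 + γ) * ε * (Vf L y * ψf L y)| ≤ 4 * K := by
      rw [hbdrysplit]
      refine le_trans (abs_add_le _ _) ?_
      refine le_trans (add_le_add_right (abs_add_le _ _) _) ?_
      refine le_trans (add_le_add_right (add_le_add_right (abs_add_le _ _) _) _) ?_
      linarith
    have hb_V : |∫ p, ε ^ ((1:ℝ)/2 + γ) * ε * (Vf p.1 p.2 * pdx ψf p.1 p.2) ∂(muOm L)| ≤ 6 * K := by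
      rw [hVψxsplit]
      refine le_trans (abs_add_le _ _) ?_
      refine le_trans (add_le_add_right (abs_add_le _ _) _) ?_
      refine le_trans (add_le_add_right (add_le_add_right (abs_add_le _ _) _) _) ?_
      linarith
    have hb_R : |(∫ p, ε ^ ((1:ℝ)/2 + γ) * ε * (-2 * ((1 - p.1) * ub p.1 p.2)) * ((p.2 * pdx (pdx ub) p.1 p.2) * (p.2 * pdx u p.1 p.2)) ∂(muOm L)) + ((∫ p, ε ^ ((1:ℝ)/2 + γ) * ε * (2 * ub p.1 p.2) * ((p.2 * pdx (pdx ub) p.1 p.2) * (p.2 * u p.1 p.2)) ∂(muOm L))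
        + ((∫ p, ε ^ ((1:ℝ)/2 + γ) * ε * (-2 * ((1 - p.1) * vb p.1 p.2)) * ((p.2 * pdx (pdy ub) p.1 p.2) * (p.2 * pdx u p.1 p.2)) ∂(muOm L)) + (∫ p, ε ^ ((1:ℝ)/2 + γ) * ε * (2 * vb p.1 p.2) * ((p.2 * pdx (pdy ub) p.1 p.2) * (p.2 * u p.1 p.2)) ∂(muOm L))))| ≤ 8 * K := by
      refine le_trans (abs_add_le _ _) ?_
      refine le_trans (add_le_add_right (abs_add_le _ _) _) ?_
      refine le_trans (add_le_add_right (add_le_add_right (abs_add_le _ _) _) _) ?_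
      linarith
    rw [intO_eq, hsplit, hGVval]
    refine le_trans (abs_add_le _ _) ?_
    have hsub : |(∫ y in Ioi (0:ℝ), ε ^ ((1:ℝ)/2 + γ) * ε * (Vf L y * ψf L y)) - ∫ p, ε ^ ((1:ℝ)/2 + γ) * ε * (Vf p.1 p.2 * pdx ψf p.1 p.2) ∂(muOm L)|
        ≤ |∫ y in Ioi (0:ℝ), ε ^ ((1:ℝ)/2 + γ) * ε * (Vf L y * ψf L y)| + |∫ p, ε ^ ((1:ℝ)/2 + γ) * ε * (Vf p.1 p.2 * pdx ψf p.1 p.2) ∂(muOm L)| := abs_sub _ _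
    linarith
  -- ==================== conclusion ====================
  have efin : K = ε ^ (γ / 2) * normX L ε γ ub vb ^ 2 * normX L ε γ u v := by
    rw [hK]
    ring
  have h0fin : 0 ≤ ε ^ (γ / 2) * normX L ε γ ub vb ^ 2 * normX L ε γ u v :=
    mul_nonneg (mul_nonneg hege.le (pow_nonneg hYnn 2)) hXnn
  have := add_le_add hI1bound hI2bound
  rw [efin] at this
  linarith
end
end

section
/- Existence of admissible non-shear Euler flows (Proposition A.1): For every δ > 0 sufficiently small and L sufficiently small relative to δ, there exists a solution [u⁰_e, v⁰_e, P⁰_e] of the steady incompressible Euler equations on Ω = (0,L)×(0,∞) (i.e. u⁰_e ∂_x u⁰_e + v⁰_e ∂_Y u⁰_e + ∂_x P⁰_e = 0, u⁰_e ∂_x v⁰_e + v⁰_e ∂_Y v⁰_e + ∂_Y P⁰_e = 0, ∂_x u⁰_e + ∂_Y v⁰_e = 0) with v⁰_e = 0 on {Y = 0} and as Y → ∞, which is not a shear flow (v⁰_e is not identically zero), and which satisfies: 0 < c₀ ≤ u⁰_e ≤ C₀ < ∞; sup|v⁰_e/Y| ≤ Cδ; ‖Y^k ∇^m v⁰_e‖_{L^∞}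 < ∞ for all sufficiently large k and all m up to any fixed order; and ‖Y^k ∇^m u⁰_e‖_{L^∞} < ∞ for all sufficiently large k and all 1 ≤ m up to any fixed order. -/
open MeasureTheory Set Filter

noncomputable section

section EulerAux
open Polynomial

def Efun (Q : Polynomial ℂ) : ℝ → ℝ → ℝ := fun x y =>
  ((Q.eval (↑x + ↑y * Complex.I)) * Complex.exp ((↑x + ↑y * Complex.I)^2)).re

def Dop (Q : Polynomial ℂ) : Polynomial ℂ := derivative Q + 2 * X * Q

lemma hasDerivAt_inner (Q : Polynomial ℂ) (z : ℂ) :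
    HasDerivAt (fun w => Q.eval w * Complex.exp (w^2))
      ((Dop Q).eval z * Complex.exp (z^2)) z := by
  have h2 : HasDerivAt (fun w : ℂ => Complex.exp (w^2))
      (Complex.exp (z^2) * (2*z)) z := by
    have := (Complex.hasDerivAt_exp (z^2)).comp z
      (by simpa using hasDerivAt_pow 2 z)
    simpa [mul_comm, Function.comp_def] using this
  have := (Q.hasDerivAt z).mul h2
  refine this.congr_deriv ?_
  simp [Dop]
  ring

lemma hasDerivAt_E_x (Q : Polynomial ℂ) (x y : ℝ) :
    HasDerivAt (fun t : ℝ => Efun Q t y) (Efun (Dop Q) x y) x := by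
  set z : ℂ := ↑x + ↑y * Complex.I with hz
  have hinner : HasDerivAt (fun w : ℂ => Q.eval (w + ↑y*Complex.I) * Complex.exp ((w + ↑y*Complex.I)^2))
      ((Dop Q).eval z * Complex.exp (z^2)) ↑x := by
    have h1 : HasDerivAt (fun w : ℂ => w + ↑y*Complex.I) 1 ↑x := (hasDerivAt_id _).add_const _
    simpa [Function.comp_def] using (hasDerivAt_inner Q z).comp (x : ℂ) h1
  have hre := Complex.reCLM.hasFDerivAt.comp_hasDerivAt x hinner.comp_ofReal
  exact hre

lemma hasDerivAt_E_y (Q : Polynomial ℂ) (x y : ℝ) :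
    HasDerivAt (fun t : ℝ => Efun Q x t) (Efun (C Complex.I * Dop Q) x y) y := by
  set z : ℂ := ↑x + ↑y * Complex.I with hz
  have hinner : HasDerivAt (fun w : ℂ => Q.eval (↑x + w*Complex.I) * Complex.exp ((↑x + w*Complex.I)^2))
      ((Dop Q).eval z * Complex.exp (z^2) * Complex.I) ↑y := by
    have h1 : HasDerivAt (fun w : ℂ => ↑x + w*Complex.I) Complex.I ↑y := by
      simpa using ((hasDerivAt_id (↑y : ℂ)).mul_const Complex.I).const_add (↑x : ℂ)
    simpa [Function.comp_def] using (hasDerivAt_inner Q z).comp (y : ℂ) h1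
  have hre := Complex.reCLM.hasFDerivAt.comp_hasDerivAt y hinner.comp_ofReal
  refine hre.congr_deriv ?_
  simp [Efun, hz]
  ring_nf

lemma pdx_E (Q : Polynomial ℂ) : pdx (Efun Q) = Efun (Dop Q) :=
  funext fun x => funext fun y => (hasDerivAt_E_x Q x y).deriv

lemma pdy_E (Q : Polynomial ℂ) : pdy (Efun Q) = Efun (C Complex.I * Dop Q) :=
  funext fun x => funext fun y => (hasDerivAt_E_y Q x y).deriv

lemma pdx_iter_E (j : ℕ) (Q : Polynomial ℂ) :
    pdx^[j] (Efun Q) = Efun (Dop^[j] Q) := by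
  induction j generalizing Q with
  | zero => rfl
  | succ n ih =>
    rw [Function.iterate_succ_apply, pdx_E, ih, Function.iterate_succ_apply]

lemma pdy_iter_E (i : ℕ) (Q : Polynomial ℂ) :
    pdy^[i] (Efun Q) = Efun ((fun R => C Complex.I * Dop R)^[i] Q) := by
  induction i generalizing Q with
  | zero => rfl
  | succ n ih =>
    rw [Function.iterate_succ_apply, pdy_E, ih, Function.iterate_succ_apply]

lemma contDiff_polyEval (Q : Polynomial ℂ) : ContDiff ℝ (⊤ : ℕ∞) fun z : ℂ => Q.eval z := by
  induction Q using Polynomial.induction_on' with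
  | add p q hp hq => simpa [Polynomial.eval_add] using hp.add hq
  | monomial n a => simpa [Polynomial.eval_monomial] using contDiff_const.mul (contDiff_id.pow n)

lemma contDiff_E (Q : Polynomial ℂ) : ContDiff ℝ (⊤ : ℕ∞) (Function.uncurry (Efun Q)) := by
  have hz : ContDiff ℝ (⊤ : ℕ∞) (fun p : ℝ × ℝ => (↑p.1 + ↑p.2 * Complex.I : ℂ)) :=
    (Complex.ofRealCLM.contDiff.comp contDiff_fst).add
      ((Complex.ofRealCLM.contDiff.comp contDiff_snd).mul contDiff_const)
  have hf : ContDiff ℝ (⊤ : ℕ∞) (fun w : ℂ => Q.eval w * Complex.exp (w^2)) :=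
    (contDiff_polyEval Q).mul
      (Complex.contDiff_exp.comp (contDiff_id.pow 2))
  exact Complex.reCLM.contDiff.comp (hf.comp hz)

lemma Efun_neg (Q : Polynomial ℂ) : Efun (-Q) = fun x y => -(Efun Q x y) := by
  funext x y; simp [Efun]

lemma Dop_CI (Q : Polynomial ℂ) : Dop (C Complex.I * Q) = C Complex.I * Dop Q := by
  simp only [Dop, derivative_C_mul, mul_add]
  ring

lemma CI_CI (R : Polynomial ℂ) : C Complex.I * (C Complex.I * R) = -R := by
  rw [← mul_assoc, ← C_mul, Complex.I_mul_I]
  simp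

lemma poly_bound (Q : Polynomial ℂ) :
    ∃ c : ℝ, 0 ≤ c ∧ ∃ d : ℕ, ∀ z : ℂ, ‖Q.eval z‖ ≤ c * (1+‖z‖)^d := by
  induction Q using Polynomial.induction_on' with
  | add p q hp hq =>
    obtain ⟨c1, hc1, d1, h1⟩ := hp; obtain ⟨c2, hc2, d2, h2⟩ := hq
    refine ⟨c1+c2, by linarith, max d1 d2, fun z => ?_⟩
    have hz : (1:ℝ) ≤ 1 + ‖z‖ := by linarith [norm_nonneg z]
    have e1 : (1+‖z‖)^d1 ≤ (1+‖z‖)^(max d1 d2) := pow_le_pow_right₀ hz (le_max_left _ _)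
    have e2 : (1+‖z‖)^d2 ≤ (1+‖z‖)^(max d1 d2) := pow_le_pow_right₀ hz (le_max_right _ _)
    calc ‖(p+q).eval z‖ ≤ ‖p.eval z‖ + ‖q.eval z‖ := by
          simpa [Polynomial.eval_add] using norm_add_le (p.eval z) (q.eval z)
      _ ≤ c1*(1+‖z‖)^d1 + c2*(1+‖z‖)^d2 := add_le_add (h1 z) (h2 z)
      _ ≤ (c1+c2)*(1+‖z‖)^(max d1 d2) := by nlinarith
  | monomial n a =>
    refine ⟨‖a‖, norm_nonneg a, n, fun z => ?_⟩
    have h : ‖z‖^n ≤ (1+‖z‖)^n := pow_le_pow_left₀ (norm_nonneg z) (by linarith [norm_nonneg z]) n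
    rw [Polynomial.eval_monomial, norm_mul, norm_pow]
    exact mul_le_mul_of_nonneg_left h (norm_nonneg a)

lemma pow_le_fact_mul_exp (t : ℝ) (ht : 0 ≤ t) (m : ℕ) :
    t^m ≤ m.factorial * Real.exp t := by
  have h := Real.sum_le_exp_of_nonneg ht (m+1)
  have h2 : t^m / m.factorial ≤ Real.exp t :=
    le_trans (Finset.single_le_sum (f := fun i => t^i / i.factorial)
      (fun i _ => by positivity) (Finset.self_mem_range_succ m)) h
  rw [div_le_iff₀ (by positivity : (0:ℝ) < m.factorial)] at h2
  linarith [h2]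

lemma sq_re_eq (x y : ℝ) : ((((x:ℂ) + (y:ℂ) * Complex.I)^2).re) = x^2 - y^2 := by
  simp [pow_two, Complex.add_re, Complex.mul_re]
  try ring

lemma Efun_abs_le (Q : Polynomial ℂ) (x y : ℝ) :
    |Efun Q x y| ≤ ‖Q.eval (↑x + ↑y * Complex.I)‖ * Real.exp (x^2 - y^2) := by
  have h1 := Complex.abs_re_le_norm ((Q.eval (↑x + ↑y * Complex.I)) * Complex.exp ((↑x + ↑y * Complex.I)^2))
  rw [norm_mul, Complex.norm_exp, sq_re_eq] at h1
  simpa [Efun] using h1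

lemma norm_z_le (x y : ℝ) (hx : 0 ≤ x) (hy : 0 ≤ y) :
    ‖(↑x + ↑y * Complex.I : ℂ)‖ ≤ x + y := by
  calc ‖(↑x + ↑y * Complex.I : ℂ)‖ ≤ ‖(x:ℂ)‖ + ‖(↑y * Complex.I : ℂ)‖ := norm_add_le _ _
    _ = |x| + |y| := by simp
    _ = x + y := by rw [abs_of_nonneg hx, abs_of_nonneg hy]

lemma E_bound (Q : Polynomial ℂ) (k : ℕ) (L : ℝ) (hL1 : L ≤ 1) :
    ∃ M : ℝ, ∀ x ∈ Icc (0:ℝ) L, ∀ y ∈ Ici (0:ℝ), |y^k * Efun Q x y| ≤ M := by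
  obtain ⟨c, hc, d, hQ⟩ := poly_bound Q
  refine ⟨c * (k+d).factorial * Real.exp 4, fun x hx y hy => ?_⟩
  obtain ⟨hx0, hxL⟩ := hx
  have hy0 : (0:ℝ) ≤ y := hy
  have hx1 : x ≤ 1 := le_trans hxL hL1
  have hz : ‖(↑x + ↑y * Complex.I : ℂ)‖ ≤ x + y := norm_z_le x y hx0 hy0
  have h1 : |y^k * Efun Q x y| = y^k * |Efun Q x y| := by
    rw [abs_mul, abs_of_nonneg (by positivity)]
  have h2 : |Efun Q x y| ≤ c * (1+(x+y))^d * Real.exp (x^2-y^2) := by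
    refine le_trans (Efun_abs_le Q x y) (mul_le_mul_of_nonneg_right ?_ (Real.exp_pos _).le)
    refine le_trans (hQ _) (mul_le_mul_of_nonneg_left ?_ hc)
    exact pow_le_pow_left₀ (by positivity) (by linarith) d
  have h3 : (1+(x+y))^d ≤ (2+y)^d := pow_le_pow_left₀ (by positivity) (by linarith) d
  have h4 : y^k ≤ (2+y)^k := pow_le_pow_left₀ hy0 (by linarith) k
  have h5 : (2+y)^(k+d) ≤ (k+d).factorial * Real.exp (2+y) :=
    pow_le_fact_mul_exp (2+y) (by linarith) (k+d)
  have h6 : Real.exp (2+y) * Real.exp (x^2-y^2) = Real.exp (2+y+(x^2-y^2)) := by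
    rw [← Real.exp_add]
  have h7 : Real.exp (2+y+(x^2-y^2)) ≤ Real.exp 4 :=
    Real.exp_le_exp.2 (by nlinarith [sq_nonneg (y - 1/2), sq_nonneg x])
  calc |y^k * Efun Q x y| = y^k * |Efun Q x y| := h1
    _ ≤ y^k * (c * (1+(x+y))^d * Real.exp (x^2-y^2)) :=
        mul_le_mul_of_nonneg_left h2 (by positivity)
    _ = (y^k * (1+(x+y))^d) * (c * Real.exp (x^2-y^2)) := by ring
    _ ≤ ((2+y)^k * (2+y)^d) * (c * Real.exp (x^2-y^2)) := by
        have h8 : y^k * (1+(x+y))^d ≤ (2+y)^k * (2+y)^d :=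
          mul_le_mul h4 h3 (by positivity) (by positivity)
        exact mul_le_mul_of_nonneg_right h8 (by positivity)
    _ = (2+y)^(k+d) * (c * Real.exp (x^2-y^2)) := by rw [pow_add]
    _ ≤ ((k+d).factorial * Real.exp (2+y)) * (c * Real.exp (x^2-y^2)) :=
        mul_le_mul_of_nonneg_right h5 (by positivity)
    _ = c * (k+d).factorial * Real.exp (2+y+(x^2-y^2)) := by rw [← h6]; ring
    _ ≤ c * (k+d).factorial * Real.exp 4 := mul_le_mul_of_nonneg_left h7 (by positivity)

def QU (δ : ℝ) : Polynomial ℂ := C (2*(δ:ℂ)) * X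
def uef (δ : ℝ) : ℝ → ℝ → ℝ := fun x y => 1 + Efun (QU δ) x y
def vef (δ : ℝ) : ℝ → ℝ → ℝ := Efun (C Complex.I * QU δ)
def Pef (δ : ℝ) : ℝ → ℝ → ℝ := fun x y => -((uef δ x y)^2 + (vef δ x y)^2)/2

lemma sq_im_eq (x y : ℝ) : ((((x:ℂ) + (y:ℂ) * Complex.I)^2).im) = 2*x*y := by
  simp [pow_two, Complex.add_im, Complex.mul_im]
  try ring

lemma vef_eq (δ x y : ℝ) : vef δ x y =
    -2*δ*Real.exp (x^2-y^2) * (y*Real.cos (2*x*y) + x*Real.sin (2*x*y)) := by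
  unfold vef Efun QU
  rw [Complex.mul_re]
  simp [Complex.exp_re, Complex.exp_im, sq_re_eq, sq_im_eq, Complex.mul_re, Complex.mul_im,
    Complex.add_re, Complex.add_im]
  ring

lemma uef_pert_abs (δ x y : ℝ) (hδ : 0 ≤ δ) (hx : 0 ≤ x) (hy : 0 ≤ y) :
    |Efun (QU δ) x y| ≤ 2*δ*(x+y)*Real.exp (x^2-y^2) := by
  have h1 := Complex.abs_re_le_norm ((QU δ).eval (↑x + ↑y * Complex.I) *
    Complex.exp ((↑x + ↑y * Complex.I)^2))
  rw [norm_mul, Complex.norm_exp, sq_re_eq] at h1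
  refine le_trans h1 ?_
  have h2 : ‖(QU δ).eval (↑x + ↑y * Complex.I)‖ ≤ 2*δ*(x+y) := by
    simp only [QU, Polynomial.eval_mul, Polynomial.eval_C, Polynomial.eval_X, norm_mul]
    have hz : ‖(↑x + ↑y * Complex.I : ℂ)‖ ≤ x + y := by
      calc ‖(↑x + ↑y * Complex.I : ℂ)‖ ≤ ‖(x:ℂ)‖ + ‖(↑y * Complex.I : ℂ)‖ :=
            norm_add_le _ _
        _ = |x| + |y| := by simp
        _ = x + y := by rw [abs_of_nonneg hx, abs_of_nonneg hy]
    have ha : ‖(2:ℂ)‖ = 2 := by norm_num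
    have hb : ‖(δ:ℂ)‖ = δ := by simp [abs_of_nonneg hδ]
    rw [ha, hb]
    exact mul_le_mul_of_nonneg_left hz (by positivity)
  exact mul_le_mul_of_nonneg_right h2 (Real.exp_pos _).le

-- numeric helpers
lemma exp_le_three {a : ℝ} (ha : a ≤ 1) : Real.exp a ≤ 3 :=
  le_trans (Real.exp_le_exp.2 ha) (by nlinarith [Real.exp_one_lt_d9])

lemma y_exp_bound (y : ℝ) (hy : 0 ≤ y) : y * Real.exp (-(y^2)) ≤ 3 := by
  calc y * Real.exp (-(y^2)) ≤ Real.exp y * Real.exp (-(y^2)) :=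
        mul_le_mul_of_nonneg_right (by linarith [Real.add_one_le_exp y]) (Real.exp_pos _).le
    _ = Real.exp (y - y^2) := by rw [← Real.exp_add]; ring_nf
    _ ≤ 3 := exp_le_three (by nlinarith)

lemma exp_split (x y : ℝ) : Real.exp (x^2-y^2) = Real.exp (x^2) * Real.exp (-(y^2)) := by
  rw [← Real.exp_add]; ring_nf

lemma uef_pert_small (δ x y : ℝ) (hδ : 0 ≤ δ) (hx : 0 ≤ x) (hx1 : x ≤ 1) (hy : 0 ≤ y) :
    |Efun (QU δ) x y| ≤ 24*δ := by
  refine le_trans (uef_pert_abs δ x y hδ hx hy) ?_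
  have h1 : Real.exp (x^2-y^2) ≤ 3 := exp_le_three (by nlinarith)
  have h2 : Real.exp (x^2) ≤ 3 := exp_le_three (by nlinarith)
  have h3 : y * Real.exp (x^2-y^2) ≤ 9 := by
    rw [exp_split]
    calc y * (Real.exp (x^2) * Real.exp (-(y^2))) = Real.exp (x^2) * (y * Real.exp (-(y^2))) := by
          ring
      _ ≤ 3 * 3 := mul_le_mul h2 (y_exp_bound y hy) (by positivity) (by norm_num)
      _ = 9 := by norm_num
  have h4 : x * Real.exp (x^2-y^2) ≤ 3 := by
    calc x * Real.exp (x^2-y^2) ≤ 1 * Real.exp (x^2-y^2) :=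
          mul_le_mul_of_nonneg_right hx1 (Real.exp_pos _).le
      _ ≤ 3 := by rw [one_mul]; exact h1
  calc 2*δ*(x+y)*Real.exp (x^2-y^2)
      = 2*δ*(x*Real.exp (x^2-y^2) + y*Real.exp (x^2-y^2)) := by ring
    _ ≤ 2*δ*(3+9) := by
        apply mul_le_mul_of_nonneg_left (by linarith) (by positivity)
    _ = 24*δ := by ring

lemma vef_div_bound (δ x y : ℝ) (hδ : 0 ≤ δ) (hx : 0 ≤ x) (hx1 : x ≤ 1) (hy : 0 < y) :
    |vef δ x y / y| ≤ 18*δ := by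
  rw [abs_div, abs_of_pos hy, div_le_iff₀ hy, vef_eq]
  have hsin : |Real.sin (2*x*y)| ≤ 2*x*y := by
    refine le_trans Real.abs_sin_le_abs ?_
    rw [abs_of_nonneg (by positivity)]
  have hcos : |Real.cos (2*x*y)| ≤ 1 := Real.abs_cos_le_one _
  have hexp : Real.exp (x^2-y^2) ≤ 3 := exp_le_three (by nlinarith)
  have hin : |y*Real.cos (2*x*y) + x*Real.sin (2*x*y)| ≤ 3*y := by
    calc |y*Real.cos (2*x*y) + x*Real.sin (2*x*y)|
        ≤ |y*Real.cos (2*x*y)| + |x*Real.sin (2*x*y)| := abs_add_le _ _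
      _ = y*|Real.cos (2*x*y)| + x*|Real.sin (2*x*y)| := by
          rw [abs_mul, abs_mul, abs_of_nonneg hy.le, abs_of_nonneg hx]
      _ ≤ y*1 + x*(2*x*y) := by
          have := mul_le_mul_of_nonneg_left hcos hy.le
          have := mul_le_mul_of_nonneg_left hsin hx
          linarith
      _ ≤ 3*y := by
          have hxx : x*x ≤ 1 := mul_le_one₀ hx1 hx hx1
          nlinarith [hy.le]
  calc |(-2*δ*Real.exp (x^2-y^2) * (y*Real.cos (2*x*y) + x*Real.sin (2*x*y)))|
      = 2*δ*Real.exp (x^2-y^2) * |y*Real.cos (2*x*y) + x*Real.sin (2*x*y)| := by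
        rw [abs_mul]
        congr 1
        rw [abs_mul, abs_mul]
        simp [abs_of_nonneg hδ, abs_of_nonneg (Real.exp_pos (x^2-y^2)).le]
    _ ≤ 2*δ*Real.exp (x^2-y^2) * (3*y) := by
        apply mul_le_mul_of_nonneg_left hin (by positivity)
    _ ≤ 2*δ*3 * (3*y) := by nlinarith [Real.exp_pos (x^2-y^2), mul_nonneg hδ hy.le]
    _ = 18*δ*y := by ring

lemma vef_tendsto (δ x : ℝ) (hx : 0 ≤ x) (hx1 : x ≤ 1) :
    Tendsto (fun y => vef δ x y) atTop (nhds 0) := by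
  have hg : Tendsto (fun y : ℝ => (2 * |δ| * Real.exp (x^2)*3) * ((y^1*Real.exp (-y)) + Real.exp (-y)))
      atTop (nhds 0) := by
    have h1 := (Real.tendsto_pow_mul_exp_neg_atTop_nhds_zero 1).add
      Real.tendsto_exp_neg_atTop_nhds_zero
    simpa using h1.const_mul (2 * |δ| * Real.exp (x^2)*3)
  refine squeeze_zero_norm' ?_ hg
  filter_upwards [eventually_ge_atTop (1:ℝ)] with y hy1
  have hy : 0 ≤ y := by linarith
  have hb : |vef δ x y| ≤ 2 * |δ| * Real.exp (x^2) * ((y+x)*Real.exp (-(y^2))) := by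
    rw [vef_eq]
    have hin : |y*Real.cos (2*x*y) + x*Real.sin (2*x*y)| ≤ y + x := by
      calc |y*Real.cos (2*x*y) + x*Real.sin (2*x*y)|
          ≤ |y*Real.cos (2*x*y)| + |x*Real.sin (2*x*y)| := abs_add_le _ _
        _ ≤ y + x := by
            rw [abs_mul, abs_mul, abs_of_nonneg hy, abs_of_nonneg hx]
            have h1 := Real.abs_cos_le_one (2*x*y)
            have h2 := Real.abs_sin_le_one (2*x*y)
            nlinarith
    calc |(-2*δ*Real.exp (x^2-y^2) * (y*Real.cos (2*x*y) + x*Real.sin (2*x*y)))|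
        = 2 * |δ| * Real.exp (x^2-y^2) * |y*Real.cos (2*x*y) + x*Real.sin (2*x*y)| := by
          rw [abs_mul]
          congr 1
          rw [abs_mul, abs_mul]
          simp [abs_of_nonneg (Real.exp_pos (x^2-y^2)).le]
      _ ≤ 2 * |δ| * Real.exp (x^2-y^2) * (y+x) := by
          apply mul_le_mul_of_nonneg_left hin (by positivity)
      _ = 2 * |δ| * Real.exp (x^2) * ((y+x)*Real.exp (-(y^2))) := by
          rw [exp_split]; ring
  refine le_trans hb ?_
  have he : Real.exp (-(y^2)) ≤ Real.exp (-y) := Real.exp_le_exp.2 (by nlinarith)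
  have hyx : (y+x)*Real.exp (-(y^2)) ≤ (y+1)*Real.exp (-y) := by
    apply mul_le_mul (by linarith) he (Real.exp_pos _).le (by linarith)
  calc 2 * |δ| * Real.exp (x^2) * ((y+x)*Real.exp (-(y^2)))
      ≤ 2 * |δ| * Real.exp (x^2) * ((y+1)*Real.exp (-y)) := by
        apply mul_le_mul_of_nonneg_left hyx (by positivity)
    _ ≤ (2 * |δ| * Real.exp (x^2)*3) * ((y^1*Real.exp (-y)) + Real.exp (-y)) := by
        have hK : (0:ℝ) ≤ 2 * |δ| * Real.exp (x^2) := by positivity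
        have hin2 : (y+1)*Real.exp (-y) ≤ 3*((y^1*Real.exp (-y)) + Real.exp (-y)) := by
          have := Real.exp_pos (-y)
          nlinarith
        have h2 := mul_le_mul_of_nonneg_left hin2 hK
        nlinarith [h2]

-- derivatives of the basic fields
lemma hasDerivAt_ue_x (δ x y : ℝ) :
    HasDerivAt (fun t : ℝ => uef δ t y) (Efun (Dop (QU δ)) x y) x :=
  (hasDerivAt_E_x (QU δ) x y).const_add 1

lemma hasDerivAt_ue_y (δ x y : ℝ) :
    HasDerivAt (fun t : ℝ => uef δ x t) (Efun (C Complex.I * Dop (QU δ)) x y) y :=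
  (hasDerivAt_E_y (QU δ) x y).const_add 1

lemma hasDerivAt_ve_x (δ x y : ℝ) :
    HasDerivAt (fun t : ℝ => vef δ t y) (Efun (C Complex.I * Dop (QU δ)) x y) x := by
  have := hasDerivAt_E_x (C Complex.I * QU δ) x y
  rwa [Dop_CI] at this

lemma hasDerivAt_ve_y (δ x y : ℝ) :
    HasDerivAt (fun t : ℝ => vef δ x t) (-(Efun (Dop (QU δ)) x y)) y := by
  have := hasDerivAt_E_y (C Complex.I * QU δ) x y
  rw [Dop_CI, CI_CI, Efun_neg] at this
  exact this

lemma pdx_ue (δ : ℝ) : pdx (uef δ) = Efun (Dop (QU δ)) :=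
  funext fun x => funext fun y => (hasDerivAt_ue_x δ x y).deriv

lemma pdy_ue (δ : ℝ) : pdy (uef δ) = Efun (C Complex.I * Dop (QU δ)) :=
  funext fun x => funext fun y => (hasDerivAt_ue_y δ x y).deriv

lemma pdx_ve (δ : ℝ) : pdx (vef δ) = Efun (C Complex.I * Dop (QU δ)) :=
  funext fun x => funext fun y => (hasDerivAt_ve_x δ x y).deriv

lemma pdy_ve (δ : ℝ) : pdy (vef δ) = fun x y => -(Efun (Dop (QU δ)) x y) :=
  funext fun x => funext fun y => (hasDerivAt_ve_y δ x y).deriv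

lemma euler_eqs (δ x y : ℝ) :
    uef δ x y * pdx (uef δ) x y + vef δ x y * pdy (uef δ) x y + pdx (Pef δ) x y = 0 ∧
    uef δ x y * pdx (vef δ) x y + vef δ x y * pdy (vef δ) x y + pdy (Pef δ) x y = 0 ∧
    pdx (uef δ) x y + pdy (vef δ) x y = 0 := by
  have hPx : pdx (Pef δ) x y =
      -((2*(uef δ x y)^1*(Efun (Dop (QU δ)) x y)) +
        (2*(vef δ x y)^1*(Efun (C Complex.I * Dop (QU δ)) x y)))/2 := by
    have h : HasDerivAt (fun t : ℝ => Pef δ t y)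
        (-((((2:ℕ):ℝ)*(uef δ x y)^1*(Efun (Dop (QU δ)) x y)) +
          (((2:ℕ):ℝ)*(vef δ x y)^1*(Efun (C Complex.I * Dop (QU δ)) x y)))/2) x :=
      ((((hasDerivAt_ue_x δ x y).pow 2).add ((hasDerivAt_ve_x δ x y).pow 2)).neg).div_const 2
    have := h.deriv
    simpa [pdx] using this
  have hPy : pdy (Pef δ) x y =
      -((2*(uef δ x y)^1*(Efun (C Complex.I * Dop (QU δ)) x y)) +
        (2*(vef δ x y)^1*(-(Efun (Dop (QU δ)) x y))))/2 := by
    have h : HasDerivAt (fun t : ℝ => Pef δ x t)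
        (-((((2:ℕ):ℝ)*(uef δ x y)^1*(Efun (C Complex.I * Dop (QU δ)) x y)) +
          (((2:ℕ):ℝ)*(vef δ x y)^1*(-(Efun (Dop (QU δ)) x y))))/2) y :=
      ((((hasDerivAt_ue_y δ x y).pow 2).add ((hasDerivAt_ve_y δ x y).pow 2)).neg).div_const 2
    have := h.deriv
    simpa [pdy] using this
  rw [pdx_ue, pdy_ue, pdx_ve, pdy_ve]
  refine ⟨?_, ?_, ?_⟩
  · rw [hPx]; ring
  · rw [hPy]; ring
  · simp

end EulerAux

/-- **Existence of admissible non-shear Euler flows (Proposition A.1).**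
For every sufficiently small δ > 0 and L sufficiently small relative to δ,
there is a smooth solution [u⁰_e, v⁰_e, P⁰_e] of the steady incompressible
Euler equations on Ω = (0,L)×(0,∞), with v⁰_e = 0 on {Y=0} and decaying as
Y → ∞, which is not shear, satisfies 0 < c₀ ≤ u⁰_e ≤ C₀, sup|v⁰_e/Y| ≤ Cδ,
and has all the weighted derivative bounds (1.13)–(1.15). -/
theorem euler_flows_exist :
    ∃ C > 0, ∃ δ₀ > 0, ∀ δ : ℝ, 0 < δ → δ ≤ δ₀ →
      ∃ L₀ > 0, ∀ L : ℝ, 0 < L → L ≤ L₀ →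
        ∃ (ue ve Pe : ℝ → ℝ → ℝ) (c₀ C₀ : ℝ),
          ContDiff ℝ (⊤ : ℕ∞) (Function.uncurry ue) ∧
          ContDiff ℝ (⊤ : ℕ∞) (Function.uncurry ve) ∧
          ContDiff ℝ (⊤ : ℕ∞) (Function.uncurry Pe) ∧
          (∀ x ∈ Ioo (0:ℝ) L, ∀ Y ∈ Ioi (0:ℝ),
            ue x Y * pdx ue x Y + ve x Y * pdy ue x Y + pdx Pe x Y = 0 ∧
            ue x Y * pdx ve x Y + ve x Y * pdy ve x Y + pdy Pe x Y = 0 ∧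
            pdx ue x Y + pdy ve x Y = 0) ∧
          (∀ x ∈ Icc (0:ℝ) L, ve x 0 = 0) ∧
          (∀ x ∈ Icc (0:ℝ) L, Tendsto (fun Y => ve x Y) atTop (nhds 0)) ∧
          (∃ x ∈ Ioo (0:ℝ) L, ∃ Y ∈ Ioi (0:ℝ), ve x Y ≠ 0) ∧
          0 < c₀ ∧
          (∀ x ∈ Icc (0:ℝ) L, ∀ Y ∈ Ici (0:ℝ), c₀ ≤ ue x Y ∧ ue x Y ≤ C₀) ∧
          (∀ x ∈ Icc (0:ℝ) L, ∀ Y ∈ Ioi (0:ℝ), |ve x Y / Y| ≤ C * δ) ∧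
          (∀ k i j : ℕ, ∃ M : ℝ, ∀ x ∈ Icc (0:ℝ) L, ∀ Y ∈ Ici (0:ℝ),
            |Y ^ k * (pdy^[i] (pdx^[j] ve)) x Y| ≤ M) ∧
          (∀ k i j : ℕ, 1 ≤ i + j → ∃ M : ℝ, ∀ x ∈ Icc (0:ℝ) L, ∀ Y ∈ Ici (0:ℝ),
            |Y ^ k * (pdy^[i] (pdx^[j] ue)) x Y| ≤ M) := by
  refine ⟨18, by norm_num, 1/48, by norm_num, fun δ hδ0 hδ48 => ⟨1, by norm_num,
    fun L hL0 hL1 => ?_⟩⟩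
  have hδ : 0 ≤ δ := hδ0.le
  refine ⟨uef δ, vef δ, Pef δ, 1/2, 3/2, ?_, ?_, ?_, ?_, ?_, ?_, ?_, by norm_num, ?_, ?_, ?_, ?_⟩
  · exact contDiff_const.add (contDiff_E (QU δ))
  · exact contDiff_E _
  · have hu : ContDiff ℝ (⊤ : ℕ∞) (Function.uncurry (uef δ)) := contDiff_const.add (contDiff_E (QU δ))
    have hv : ContDiff ℝ (⊤ : ℕ∞) (Function.uncurry (vef δ)) := contDiff_E _
    exact (((hu.pow 2).add (hv.pow 2)).neg).div_const 2
  · exact fun x _ Y _ => euler_eqs δ x Y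
  · intro x _
    rw [vef_eq]
    simp
  · intro x hx
    exact vef_tendsto δ x hx.1 (le_trans hx.2 hL1)
  · -- non-shear
    refine ⟨L/2, ⟨by linarith, by linarith⟩, 1, by norm_num, ?_⟩
    rw [vef_eq]
    have h2 : 2*(L/2)*(1:ℝ) = L := by ring
    rw [h2]
    have hπ : L < Real.pi/2 := by nlinarith [Real.pi_gt_three]
    have hcos : 0 < Real.cos L := Real.cos_pos_of_mem_Ioo ⟨by linarith, hπ⟩
    have hsin : 0 < Real.sin L := Real.sin_pos_of_pos_of_lt_pi hL0 (by nlinarith [Real.pi_gt_three])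
    have hin : 0 < 1*Real.cos L + L/2*Real.sin L := by nlinarith
    have : -2*δ*Real.exp ((L/2)^2-1^2) * (1*Real.cos L + L/2*Real.sin L) < 0 := by
      have hE := Real.exp_pos ((L/2)^2-1^2)
      nlinarith [mul_pos (mul_pos hδ0 hE) hin]
    exact ne_of_lt this
  · -- bounds on ue
    intro x hx Y hY
    have h := uef_pert_small δ x Y hδ hx.1 (le_trans hx.2 hL1) hY
    have h24 : 24*δ ≤ 1/2 := by linarith
    have := abs_le.mp (le_trans h h24)
    constructor <;> [skip; skip] <;> simp only [uef] <;> linarith [this.1, this.2]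
  · -- v/Y bound
    intro x hx Y hY
    exact le_trans (vef_div_bound δ x Y hδ hx.1 (le_trans hx.2 hL1) hY) (by linarith)
  · -- weighted bounds for ve
    intro k i j
    have hrw : pdy^[i] (pdx^[j] (vef δ)) =
        Efun ((fun R => Polynomial.C Complex.I * Dop R)^[i] (Dop^[j] (Polynomial.C Complex.I * QU δ))) := by
      rw [show vef δ = Efun (Polynomial.C Complex.I * QU δ) from rfl, pdx_iter_E, pdy_iter_E]
    rw [hrw]
    exact E_bound _ k L hL1
  · -- weighted bounds for ue
    intro k i j hij
    match j, i, hij with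
    | 0, i+1, _ =>
      have hrw : pdy^[i+1] (pdx^[0] (uef δ)) =
          Efun ((fun R => Polynomial.C Complex.I * Dop R)^[i] (Polynomial.C Complex.I * Dop (QU δ))) := by
        rw [Function.iterate_zero_apply, Function.iterate_succ_apply, pdy_ue, pdy_iter_E]
      rw [hrw]
      exact E_bound _ k L hL1
    | j+1, i, _ =>
      have hrw : pdy^[i] (pdx^[j+1] (uef δ)) =
          Efun ((fun R => Polynomial.C Complex.I * Dop R)^[i] (Dop^[j] (Dop (QU δ)))) := by
        rw [Function.iterate_succ_apply, pdx_ue, pdx_iter_E, pdy_iter_E]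
      rw [hrw]
      exact E_bound _ k L hL1
end
end
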